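/- arXiv:2403.02051 — 7 statements merged into one kernel-verified Lean document; each statement's English description precedes it below -/
import Mathlib

section
/- Suppose Assumptions 1, 2 and 3 hold, let X ∈ 𝒳ⁿ be a dataset and let Ω ⊆ {1,…,n} be any nonempty subset. Then for every η ≥ 0 and every θ ∈ ℝ^d, ‖θ − ϑ⋆ − η ∇F_Ω(θ, X)‖² ≤ (1 − 2ηm + η² K₁²) ‖θ − ϑ⋆‖² + 2ηK. -/
/-!
Since every per-sample gradient vanishes at `ϑ⋆`, Assumption 1 (with `x = x'`) bounds it by
`K₁‖θ - ϑ⋆‖` and Assumption 2 bounds its inner product with `θ - ϑ⋆` below by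
`m‖θ - ϑ⋆‖² - K`. Both bounds describe convex sets (a ball and a half-space), so they pass to the
minibatch average, and expanding the square of `θ - ϑ⋆ - η g` gives the claim.
-/

open scoped RealInnerProductSpace

theorem Convex.inv_card_smul_sum_mem {𝕜 E ι : Type*} [Field 𝕜] [LinearOrder 𝕜]
    [IsStrictOrderedRing 𝕜] [AddCommGroup E] [Module 𝕜 E] {s : Set E} (hs : Convex 𝕜 s)
    {t : Finset ι} (ht : t.Nonempty) {z : ι → E} (hz : ∀ i ∈ t, z i ∈ s) :
    (t.card : 𝕜)⁻¹ • ∑ i ∈ t, z i ∈ s := by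
  have hcard : (t.card : 𝕜) ≠ 0 := by exact_mod_cast ht.card_pos.ne'
  rw [Finset.smul_sum]
  refine hs.sum_mem (fun _ _ => by positivity) ?_ hz
  rw [Finset.sum_const, nsmul_eq_mul, mul_inv_cancel₀ hcard]

theorem norm_sub_smul_sq_le_of_dissipative {E : Type*} [NormedAddCommGroup E]
    [InnerProductSpace ℝ E] {a g : E} {L m K η : ℝ} (hg : ‖g‖ ≤ L * ‖a‖)
    (hga : m * ‖a‖ ^ 2 - K ≤ ⟪g, a⟫) (hη : 0 ≤ η) :
    ‖a - η • g‖ ^ 2 ≤ (1 - 2 * η * m + η ^ 2 * L ^ 2) * ‖a‖ ^ 2 + 2 * η * K := by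
  have hexpand : ‖a - η • g‖ ^ 2 = ‖a‖ ^ 2 - 2 * η * ⟪g, a⟫ + η ^ 2 * ‖g‖ ^ 2 := by
    rw [norm_sub_sq_real, real_inner_smul_right, real_inner_comm, norm_smul, mul_pow,
      Real.norm_eq_abs, sq_abs]
    ring
  have hg_sq : ‖g‖ ^ 2 ≤ L ^ 2 * ‖a‖ ^ 2 := by
    rw [← mul_pow]
    exact pow_le_pow_left₀ (norm_nonneg g) hg 2
  rw [hexpand]
  nlinarith [mul_le_mul_of_nonneg_left hg_sq (sq_nonneg η), mul_le_mul_of_nonneg_left hga hη]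

theorem sgd_step_contraction_general
    {d : ℕ} {H : Type*} [NormedAddCommGroup H] [InnerProductSpace ℝ H]
    (𝒳 : Set H) (f : EuclideanSpace ℝ (Fin d) → H → ℝ)
    (K₁ K₂ : ℝ)
    (hA1 : ∀ (θ θ' : EuclideanSpace ℝ (Fin d)), ∀ x ∈ 𝒳, ∀ x' ∈ 𝒳,
      ‖gradient (fun ϑ => f ϑ x) θ - gradient (fun ϑ => f ϑ x') θ'‖ ≤
        K₁ * ‖θ - θ'‖ + K₂ * ‖x - x'‖ * (‖θ‖ + ‖θ'‖ + 1))
    (m K : ℝ)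
    (hA2b : ∀ (θ₁ θ₂ : EuclideanSpace ℝ (Fin d)), ∀ x ∈ 𝒳,
      m * ‖θ₁ - θ₂‖ ^ 2 - K ≤
        ⟪gradient (fun ϑ => f ϑ x) θ₁ - gradient (fun ϑ => f ϑ x) θ₂, θ₁ - θ₂⟫)
    (ϑstar : EuclideanSpace ℝ (Fin d))
    (hA3 : ∀ x ∈ 𝒳, gradient (fun ϑ => f ϑ x) ϑstar = 0)
    {n : ℕ} (X : Fin n → H) (hX : ∀ i, X i ∈ 𝒳)
    (S : Finset (Fin n)) (hS : S.Nonempty)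
    (η : ℝ) (hη : 0 ≤ η) (θ : EuclideanSpace ℝ (Fin d)) :
    ‖θ - ϑstar - η • ((S.card : ℝ)⁻¹ • ∑ j ∈ S, gradient (fun ϑ => f ϑ (X j)) θ)‖ ^ 2
      ≤ (1 - 2 * η * m + η ^ 2 * K₁ ^ 2) * ‖θ - ϑstar‖ ^ 2 + 2 * η * K := by
  set a := θ - ϑstar
  have hbounded : ∀ j ∈ S,
      gradient (fun ϑ => f ϑ (X j)) θ ∈ Metric.closedBall 0 (K₁ * ‖a‖) := fun j _ => by
    simpa [hA3 _ (hX j)] using hA1 θ ϑstar (X j) (hX j) (X j) (hX j)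
  have hdissipative : ∀ j ∈ S,
      gradient (fun ϑ => f ϑ (X j)) θ ∈ {g | m * ‖a‖ ^ 2 - K ≤ ⟪g, a⟫} := fun j _ => by
    simpa only [Set.mem_ofPred_eq, hA3 _ (hX j), sub_zero] using hA2b θ ϑstar (X j) (hX j)
  have hconvex : Convex ℝ {g : EuclideanSpace ℝ (Fin d) | m * ‖a‖ ^ 2 - K ≤ ⟪g, a⟫} :=
    convex_halfSpace_ge
      ⟨fun g g' => inner_add_left g g' a, fun c g => real_inner_smul_left g a c⟩ _
  refine norm_sub_smul_sq_le_of_dissipative ?_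
    (hconvex.inv_card_smul_sum_mem hS hdissipative) hη
  simpa using (convex_closedBall _ _).inv_card_smul_sum_mem hS hbounded

/-- Under Assumptions 1, 2 and 3, one SGD step with any nonempty minibatch
`S` contracts the squared distance to the universal stable point `ϑ⋆`:
`‖θ - ϑ⋆ - η ∇F_S(θ,X)‖² ≤ (1 - 2ηm + η²K₁²)‖θ - ϑ⋆‖² + 2ηK`. -/
theorem sgd_step_contraction
    {d : ℕ} {H : Type*} [NormedAddCommGroup H] [InnerProductSpace ℝ H]
    (𝒳 : Set H) (f : EuclideanSpace ℝ (Fin d) → H → ℝ)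
    (K₁ K₂ : ℝ) (hK₁ : 0 < K₁) (hK₂ : 0 < K₂)
    (hdiff : ∀ x ∈ 𝒳, Differentiable ℝ (fun θ => f θ x))
    (hA1 : ∀ (θ θ' : EuclideanSpace ℝ (Fin d)), ∀ x ∈ 𝒳, ∀ x' ∈ 𝒳,
      ‖gradient (fun ϑ => f ϑ x) θ - gradient (fun ϑ => f ϑ x') θ'‖ ≤
        K₁ * ‖θ - θ'‖ + K₂ * ‖x - x'‖ * (‖θ‖ + ‖θ'‖ + 1))
    (B m K : ℝ) (hB : 0 < B) (hm : 0 < m) (hK : 0 < K)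
    (hA2a : ∀ x ∈ 𝒳, ‖gradient (fun ϑ => f ϑ x) 0‖ ≤ B)
    (hA2b : ∀ (θ₁ θ₂ : EuclideanSpace ℝ (Fin d)), ∀ x ∈ 𝒳,
      m * ‖θ₁ - θ₂‖ ^ 2 - K ≤
        ⟪gradient (fun ϑ => f ϑ x) θ₁ - gradient (fun ϑ => f ϑ x) θ₂, θ₁ - θ₂⟫)
    (ϑstar : EuclideanSpace ℝ (Fin d))
    (hA3 : ∀ x ∈ 𝒳, gradient (fun ϑ => f ϑ x) ϑstar = 0)
    {n : ℕ} (hn : 0 < n) (X : Fin n → H) (hX : ∀ i, X i ∈ 𝒳)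
    (S : Finset (Fin n)) (hS : S.Nonempty)
    (η : ℝ) (hη : 0 ≤ η) (θ : EuclideanSpace ℝ (Fin d)) :
    ‖θ - ϑstar - η • ((S.card : ℝ)⁻¹ • ∑ j ∈ S, gradient (fun ϑ => f ϑ (X j)) θ)‖ ^ 2
      ≤ (1 - 2 * η * m + η ^ 2 * K₁ ^ 2) * ‖θ - ϑstar‖ ^ 2 + 2 * η * K :=
  sgd_step_contraction_general 𝒳 f K₁ K₂ hA1 m K hA2b ϑstar hA3 X hX S hS η hη θ
end

section
/- Suppose Assumptions 1, 2 and 3 hold, let X ∈ 𝒳ⁿ be a dataset, let p ∈ (0,1], let 0 < η < min(m/K₁², 1/m), let σ > 0, and let ξ be a random vector in ℝ^d with 𝔼‖ξ‖^p < ∞. Then for every θ ∈ ℝ^d, 𝔼[V_p(θ − η ∇F(θ, X) + σξ)] ≤ (1 − ηmp/2) V_p(θ) + 1 + (2ηK)^{p/2} + σ^p 𝔼‖ξ‖^p. -/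
open scoped BigOperators RealInnerProductSpace
open MeasureTheory

/-!
At the universal stable point every gradient vanishes, so Assumptions 1 and 2 bound each
`∇f(θ, x)` in norm by `K₁‖θ - ϑ⋆‖` and make it dissipative towards `ϑ⋆`; both conditions are
convex, hence hold for the average `∇F(θ, X)`. With the step size restriction this gives the
deterministic drift `‖θ - η∇F - ϑ⋆‖² ≤ (1 - ηm)‖θ - ϑ⋆‖² + 2ηK`. Since `√(1 + ‖·‖²)` satisfies
the triangle inequality and `x ↦ x ^ q` is subadditive for `q ≤ 1`, the noise contributes at most
`σ^p ‖ξ‖^p`, and concavity of `x ↦ x ^ (p/2)` (Bernoulli) turns the factor `(1 - ηm)` into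
`1 - ηmp/2`.
-/

theorem Convex.inv_natCast_smul_sum_mem {E : Type*} [AddCommGroup E] [Module ℝ E] {s : Set E}
    (hs : Convex ℝ s) {n : ℕ} (hn : 0 < n) {z : Fin n → E} (hz : ∀ i, z i ∈ s) :
    (n : ℝ)⁻¹ • ∑ i, z i ∈ s := by
  rw [Finset.smul_sum]
  refine hs.sum_mem (fun _ _ => by positivity) ?_ (fun i _ => hz i)
  simp [Finset.card_univ, (Nat.cast_pos.2 hn).ne']

section InnerProductSpace

variable {E : Type*} [NormedAddCommGroup E] [InnerProductSpace ℝ E]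

theorem convex_norm_le_inter_inner_ge (u : E) (L a : ℝ) :
    Convex ℝ ({v : E | ‖v‖ ≤ L} ∩ {v | a ≤ ⟪u, v⟫}) := by
  refine Convex.inter ?_ (convex_halfSpace_ge (innerₛₗ ℝ u).isLinear a)
  simpa only [Metric.closedBall, dist_zero_right] using convex_closedBall (0 : E) L

theorem norm_sub_smul_sq_le_of_dissipative_s5 {u G : E} {L m K η : ℝ}
    (hG : ‖G‖ ≤ L * ‖u‖) (hGu : m * ‖u‖ ^ 2 - K ≤ ⟪u, G⟫) (hη : 0 ≤ η) (hηL : η * L ^ 2 ≤ m) :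
    ‖u - η • G‖ ^ 2 ≤ (1 - η * m) * ‖u‖ ^ 2 + 2 * η * K := by
  have hG2 : η ^ 2 * ‖G‖ ^ 2 ≤ η * m * ‖u‖ ^ 2 :=
    calc η ^ 2 * ‖G‖ ^ 2 ≤ η ^ 2 * (L * ‖u‖) ^ 2 := by gcongr
      _ = η * (η * L ^ 2) * ‖u‖ ^ 2 := by ring
      _ ≤ η * m * ‖u‖ ^ 2 := by gcongr
  rw [norm_sub_sq_real, real_inner_smul_right, norm_smul, Real.norm_of_nonneg hη, mul_pow]
  nlinarith [mul_le_mul_of_nonneg_left hGu hη]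

end InnerProductSpace

theorem one_add_rpow_le_of_le_contraction {r s t c q : ℝ} (hr : 0 ≤ r) (hs : 0 ≤ s)
    (ht0 : 0 ≤ t) (ht1 : t ≤ 1) (hc : 0 ≤ c) (hq0 : 0 ≤ q) (hq1 : q ≤ 1)
    (hrs : r ≤ (1 - t) * s + c) :
    (1 + r) ^ q ≤ (1 - t * q) * (1 + s) ^ q + 1 + c ^ q := by
  have hbernoulli : (1 - t) ^ q ≤ 1 - t * q := by
    rw [sub_eq_add_neg]
    linarith [rpow_one_add_le_one_add_mul_self (s := -t) (by linarith) hq0 hq1]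
  calc (1 + r) ^ q ≤ ((1 - t) * (1 + s) + (t + c)) ^ q :=
        Real.rpow_le_rpow (by positivity) (by linarith) hq0
    _ ≤ ((1 - t) * (1 + s)) ^ q + (t + c) ^ q :=
        Real.rpow_add_le_add_rpow (by nlinarith) (by positivity) hq0 hq1
    _ ≤ (1 - t) ^ q * (1 + s) ^ q + (t ^ q + c ^ q) := by
        rw [Real.mul_rpow (by linarith) (by positivity)]
        gcongr
        exact Real.rpow_add_le_add_rpow ht0 hc hq0 hq1
    _ ≤ (1 - t * q) * (1 + s) ^ q + (1 + c ^ q) := by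
        gcongr
        exact Real.rpow_le_one ht0 ht1 hq0
    _ = (1 - t * q) * (1 + s) ^ q + 1 + c ^ q := by ring

section SeminormedAddCommGroup

variable {F : Type*} [SeminormedAddCommGroup F]

theorem sqrt_one_add_norm_add_sq_le (v w : F) :
    √(1 + ‖v + w‖ ^ 2) ≤ √(1 + ‖v‖ ^ 2) + ‖w‖ := by
  have hv : ‖v‖ ≤ √(1 + ‖v‖ ^ 2) := Real.le_sqrt_of_sq_le (by linarith)
  have hsq : √(1 + ‖v‖ ^ 2) ^ 2 = 1 + ‖v‖ ^ 2 := Real.sq_sqrt (by positivity)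
  rw [Real.sqrt_le_iff]
  refine ⟨by positivity, ?_⟩
  nlinarith [norm_add_le v w, norm_nonneg (v + w), norm_nonneg w]

theorem one_add_norm_add_sq_rpow_le (v w : F) {q : ℝ} (hq0 : 0 ≤ q) (hq1 : q ≤ 1) :
    (1 + ‖v + w‖ ^ 2) ^ (q / 2) ≤ (1 + ‖v‖ ^ 2) ^ (q / 2) + ‖w‖ ^ q := by
  rw [Real.rpow_div_two_eq_sqrt q (by positivity), Real.rpow_div_two_eq_sqrt q (by positivity)]
  calc √(1 + ‖v + w‖ ^ 2) ^ q ≤ (√(1 + ‖v‖ ^ 2) + ‖w‖) ^ q := by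
        gcongr; exact sqrt_one_add_norm_add_sq_le v w
    _ ≤ √(1 + ‖v‖ ^ 2) ^ q + ‖w‖ ^ q :=
        Real.rpow_add_le_add_rpow (by positivity) (norm_nonneg w) hq0 hq1

theorem integral_one_add_norm_add_smul_sq_rpow_le [NormedSpace ℝ F] {Ω : Type*}
    [MeasurableSpace Ω] (μ : Measure Ω) [IsProbabilityMeasure μ] (a : F) {σ q : ℝ}
    (hσ : 0 ≤ σ) (hq0 : 0 ≤ q) (hq1 : q ≤ 1) {ξ : Ω → F}
    (hξ : Integrable (fun ω => ‖ξ ω‖ ^ q) μ) :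
    ∫ ω, (1 + ‖a + σ • ξ ω‖ ^ 2) ^ (q / 2) ∂μ
      ≤ (1 + ‖a‖ ^ 2) ^ (q / 2) + σ ^ q * ∫ ω, ‖ξ ω‖ ^ q ∂μ := by
  have hpointwise (ω : Ω) :
      (1 + ‖a + σ • ξ ω‖ ^ 2) ^ (q / 2) ≤ (1 + ‖a‖ ^ 2) ^ (q / 2) + σ ^ q * ‖ξ ω‖ ^ q := by
    have h := one_add_norm_add_sq_rpow_le a (σ • ξ ω) hq0 hq1
    rwa [norm_smul, Real.norm_of_nonneg hσ, Real.mul_rpow hσ (norm_nonneg _)] at h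
  calc ∫ ω, (1 + ‖a + σ • ξ ω‖ ^ 2) ^ (q / 2) ∂μ
      ≤ ∫ ω, ((1 + ‖a‖ ^ 2) ^ (q / 2) + σ ^ q * ‖ξ ω‖ ^ q) ∂μ :=
        integral_mono_of_nonneg (ae_of_all _ fun _ => by positivity)
          ((integrable_const _).add (hξ.const_mul _)) (ae_of_all _ hpointwise)
    _ = (1 + ‖a‖ ^ 2) ^ (q / 2) + σ ^ q * ∫ ω, ‖ξ ω‖ ^ q ∂μ := by
        rw [integral_add (integrable_const _) (hξ.const_mul _), integral_const,
          integral_const_mul, probReal_univ, one_smul]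

end SeminormedAddCommGroup

theorem lyapunov_drift_gd_general
    {d : ℕ} {H : Type*} [NormedAddCommGroup H] [InnerProductSpace ℝ H]
    (𝒳 : Set H) (f : EuclideanSpace ℝ (Fin d) → H → ℝ)
    (K₁ K₂ : ℝ) (hK₁ : 0 < K₁)
    (hA1 : ∀ (θ θ' : EuclideanSpace ℝ (Fin d)), ∀ x ∈ 𝒳, ∀ x' ∈ 𝒳,
      ‖gradient (fun ϑ => f ϑ x) θ - gradient (fun ϑ => f ϑ x') θ'‖ ≤
        K₁ * ‖θ - θ'‖ + K₂ * ‖x - x'‖ * (‖θ‖ + ‖θ'‖ + 1))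
    (m K : ℝ) (hm : 0 < m) (hK : 0 < K)
    (hA2b : ∀ (θ₁ θ₂ : EuclideanSpace ℝ (Fin d)), ∀ x ∈ 𝒳,
      m * ‖θ₁ - θ₂‖ ^ 2 - K ≤
        ⟪gradient (fun ϑ => f ϑ x) θ₁ - gradient (fun ϑ => f ϑ x) θ₂, θ₁ - θ₂⟫)
    (ϑstar : EuclideanSpace ℝ (Fin d))
    (hA3 : ∀ x ∈ 𝒳, gradient (fun ϑ => f ϑ x) ϑstar = 0)
    {n : ℕ} (hn : 0 < n) (X : Fin n → H) (hX : ∀ i, X i ∈ 𝒳)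
    (p : ℝ) (hp0 : 0 < p) (hp1 : p ≤ 1)
    (η : ℝ) (hη0 : 0 < η) (hη : η < min (m / K₁ ^ 2) (1 / m))
    (σ : ℝ) (hσ : 0 < σ)
    {Ω : Type*} [MeasurableSpace Ω] (μ : Measure Ω) [IsProbabilityMeasure μ]
    (ξ : Ω → EuclideanSpace ℝ (Fin d))
    (hint : Integrable (fun ω => ‖ξ ω‖ ^ p) μ)
    (θ : EuclideanSpace ℝ (Fin d)) :
    ∫ ω, (1 + ‖θ - η • ((n : ℝ)⁻¹ • ∑ j : Fin n, gradient (fun ϑ => f ϑ (X j)) θ)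
            + σ • ξ ω - ϑstar‖ ^ 2) ^ (p / 2) ∂μ
      ≤ (1 - η * m * p / 2) * (1 + ‖θ - ϑstar‖ ^ 2) ^ (p / 2)
        + 1 + (2 * η * K) ^ (p / 2) + σ ^ p * ∫ ω, ‖ξ ω‖ ^ p ∂μ := by
  set u := θ - ϑstar with hu
  set G := (n : ℝ)⁻¹ • ∑ j : Fin n, gradient (fun ϑ => f ϑ (X j)) θ
  have hG : G ∈ {v | ‖v‖ ≤ K₁ * ‖u‖} ∩ {v | m * ‖u‖ ^ 2 - K ≤ ⟪u, v⟫} := by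
    refine (convex_norm_le_inter_inner_ge u _ _).inv_natCast_smul_sum_mem hn fun j => ?_
    have hlip := hA1 θ ϑstar (X j) (hX j) (X j) (hX j)
    have hdiss := hA2b θ ϑstar (X j) (hX j)
    simp only [hA3 _ (hX j), sub_zero, sub_self, norm_zero, mul_zero, zero_mul, add_zero]
      at hlip hdiss
    exact ⟨hlip, hdiss.trans_eq (real_inner_comm _ _)⟩
  have hηm : η * m < 1 := (lt_div_iff₀ hm).1 (lt_min_iff.1 hη).2
  have hηK₁ : η * K₁ ^ 2 ≤ m := ((lt_div_iff₀ (by positivity)).1 (lt_min_iff.1 hη).1).le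
  have hdrift := norm_sub_smul_sq_le_of_dissipative_s5 hG.1 hG.2 hη0.le hηK₁
  have hstep (ω : Ω) : θ - η • G + σ • ξ ω - ϑstar = u - η • G + σ • ξ ω := by
    rw [hu]; abel
  simp_rw [hstep]
  calc _ ≤ (1 + ‖u - η • G‖ ^ 2) ^ (p / 2) + σ ^ p * ∫ ω, ‖ξ ω‖ ^ p ∂μ :=
        integral_one_add_norm_add_smul_sq_rpow_le μ (u - η • G) hσ.le hp0.le hp1 hint
    _ ≤ _ := by
        rw [mul_div_assoc]
        gcongr
        exact one_add_rpow_le_of_le_contraction (sq_nonneg _) (sq_nonneg _) (by positivity)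
          hηm.le (by positivity) (by positivity) (by linarith) hdrift

/-- Under Assumptions 1, 2 and 3, for `p ∈ (0,1]`,
`0 < η < min(m/K₁², 1/m)`, `σ > 0` and a random vector `ξ` with `𝔼‖ξ‖^p < ∞`, the
Lyapunov function `V_p(θ) = (1 + ‖θ - ϑ⋆‖²)^{p/2}` satisfies a Foster–Lyapunov drift
condition along one noisy GD step. -/
theorem lyapunov_drift_gd
    {d : ℕ} {H : Type*} [NormedAddCommGroup H] [InnerProductSpace ℝ H]
    (𝒳 : Set H) (f : EuclideanSpace ℝ (Fin d) → H → ℝ)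
    (K₁ K₂ : ℝ) (hK₁ : 0 < K₁) (hK₂ : 0 < K₂)
    (hdiff : ∀ x ∈ 𝒳, Differentiable ℝ (fun θ => f θ x))
    (hA1 : ∀ (θ θ' : EuclideanSpace ℝ (Fin d)), ∀ x ∈ 𝒳, ∀ x' ∈ 𝒳,
      ‖gradient (fun ϑ => f ϑ x) θ - gradient (fun ϑ => f ϑ x') θ'‖ ≤
        K₁ * ‖θ - θ'‖ + K₂ * ‖x - x'‖ * (‖θ‖ + ‖θ'‖ + 1))
    (B m K : ℝ) (hB : 0 < B) (hm : 0 < m) (hK : 0 < K)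
    (hA2a : ∀ x ∈ 𝒳, ‖gradient (fun ϑ => f ϑ x) 0‖ ≤ B)
    (hA2b : ∀ (θ₁ θ₂ : EuclideanSpace ℝ (Fin d)), ∀ x ∈ 𝒳,
      m * ‖θ₁ - θ₂‖ ^ 2 - K ≤
        ⟪gradient (fun ϑ => f ϑ x) θ₁ - gradient (fun ϑ => f ϑ x) θ₂, θ₁ - θ₂⟫)
    (ϑstar : EuclideanSpace ℝ (Fin d))
    (hA3 : ∀ x ∈ 𝒳, gradient (fun ϑ => f ϑ x) ϑstar = 0)
    {n : ℕ} (hn : 0 < n) (X : Fin n → H) (hX : ∀ i, X i ∈ 𝒳)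
    (p : ℝ) (hp0 : 0 < p) (hp1 : p ≤ 1)
    (η : ℝ) (hη0 : 0 < η) (hη : η < min (m / K₁ ^ 2) (1 / m))
    (σ : ℝ) (hσ : 0 < σ)
    {Ω : Type*} [MeasurableSpace Ω] (μ : Measure Ω) [IsProbabilityMeasure μ]
    (ξ : Ω → EuclideanSpace ℝ (Fin d)) (hξ : Measurable ξ)
    (hint : Integrable (fun ω => ‖ξ ω‖ ^ p) μ)
    (θ : EuclideanSpace ℝ (Fin d)) :
    ∫ ω, (1 + ‖θ - η • ((n : ℝ)⁻¹ • ∑ j : Fin n, gradient (fun ϑ => f ϑ (X j)) θ)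
            + σ • ξ ω - ϑstar‖ ^ 2) ^ (p / 2) ∂μ
      ≤ (1 - η * m * p / 2) * (1 + ‖θ - ϑstar‖ ^ 2) ^ (p / 2)
        + 1 + (2 * η * K) ^ (p / 2) + σ ^ p * ∫ ω, ‖ξ ω‖ ^ p ∂μ :=
  lyapunov_drift_gd_general 𝒳 f K₁ K₂ hK₁ hA1 m K hm hK hA2b ϑstar hA3 hn X hX p hp0 hp1 η hη0 hη σ
    hσ μ ξ hint θ
end

section
/- Suppose Assumptions 1, 2 and 3 hold, let X ∈ 𝒳ⁿ be a dataset, let p ∈ [1, 2), let 0 < η ≤ min(m/(2K₁²), 1/m, 1), and define b(θ) := −∇F(θ, X). Then for every θ ∈ ℝ^d, ∫₀^η ⟨∇V_p(θ + r b(θ)), b(θ)⟩ dr ≤ −(mpη/2) V_p(θ) + η ( p(m/2 + K) + m(2K)^{p/2} ). -/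
/-!
Write `u = θ - ϑ⋆` and `b = b(θ)`. Assumptions 1 and 3 give `‖∇f(θ,x)‖ ≤ K₁‖u‖`, and Assumptions 2
and 3 give `⟪∇f(θ,x), u⟫ ≥ m‖u‖² - K`; both pass to the average `-b` because closed balls and
half-spaces are convex. The step-size condition `ηK₁² ≤ m/2` then keeps, along the whole segment
`w = u + r b`, `0 ≤ r ≤ η`, both `⟪w, b⟫ ≤ K - (m/2)‖u‖²` and `‖w‖² ≤ ‖u‖² + 2K`, and the integrand
is bounded pointwise by a scalar inequality: if `K - (m/2)‖u‖² ≥ 0` the weight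
`(1 + ‖w‖²)^((p-2)/2)` is at most `1`, otherwise it is at least `(1 + ‖u‖² + 2K)^((p-2)/2)`.
-/

open scoped RealInnerProductSpace

namespace Real

theorem rpow_sub_two_div_two_mul_self {x : ℝ} (hx : 0 < x) (p : ℝ) :
    x ^ ((p - 2) / 2) * x = x ^ (p / 2) := by
  rw [← rpow_add_one hx.ne']
  ring_nf

end Real

theorem Convex.inv_card_smul_sum_mem_s10 {ι E : Type*} [Fintype ι] [Nonempty ι] [AddCommGroup E]
    [Module ℝ E] {s : Set E} (hs : Convex ℝ s) {g : ι → E} (hg : ∀ i, g i ∈ s) :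
    (Fintype.card ι : ℝ)⁻¹ • ∑ i, g i ∈ s := by
  simpa [Finset.centerMass] using
    hs.centerMass_mem (t := Finset.univ) (w := fun _ => (1 : ℝ)) (by simp)
      (by simp [Fintype.card_pos]) fun i _ => hg i

section Scalar

variable {p m K s : ℝ}

theorem lyapunov_scalar_bound_of_nonneg (hp0 : 0 ≤ p) (hp2 : p ≤ 2) (hm : 0 < m) (hK : 0 < K)
    (hs : 0 ≤ s) {t : ℝ} (ht : 0 ≤ t) (ha : 0 ≤ K - m / 2 * s) :
    p * (1 + t) ^ ((p - 2) / 2) * (K - m / 2 * s)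
      ≤ -(m * p / 2) * (1 + s) ^ (p / 2) + (p * (m / 2 + K) + m * (2 * K) ^ (p / 2)) := by
  have hweight : p * (1 + t) ^ ((p - 2) / 2) ≤ p :=
    mul_le_of_le_one_right hp0 (Real.rpow_le_one_of_one_le_of_nonpos (by linarith) (by linarith))
  have hpow : (1 + s) ^ (p / 2) ≤ 1 + s := by
    simpa using Real.rpow_le_rpow_of_exponent_le (by linarith : 1 ≤ 1 + s) (by linarith : p / 2 ≤ 1)
  have hmp : m * p / 2 * (1 + s) ^ (p / 2) ≤ m * p / 2 * (1 + s) :=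
    mul_le_mul_of_nonneg_left hpow (by positivity)
  have hconst : 0 ≤ m * (2 * K) ^ (p / 2) := by positivity
  nlinarith [mul_le_mul_of_nonneg_right hweight ha]

theorem lyapunov_scalar_bound_of_neg (hp0 : 0 ≤ p) (hp2 : p ≤ 2) (hm : 0 < m) (hK : 0 < K)
    (hs : 0 ≤ s) {t : ℝ} (ht0 : 0 ≤ t) (ht : t ≤ s + 2 * K) (ha : K - m / 2 * s < 0) :
    p * (1 + t) ^ ((p - 2) / 2) * (K - m / 2 * s)
      ≤ -(m * p / 2) * (1 + s) ^ (p / 2) + (p * (m / 2 + K) + m * (2 * K) ^ (p / 2)) := by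
  set z := 1 + s + 2 * K
  set e := z ^ ((p - 2) / 2)
  have hz : 0 < z := by positivity
  have he_le : p * e ≤ p * (1 + t) ^ ((p - 2) / 2) :=
    mul_le_mul_of_nonneg_left (Real.rpow_le_rpow_of_nonpos (by linarith) (by linarith)
      (by linarith)) hp0
  have he_one : e ≤ 1 := Real.rpow_le_one_of_one_le_of_nonpos (by linarith) (by linarith)
  have hK_mul_e : 2 * K * e ≤ (2 * K) ^ (p / 2) := by
    rw [← Real.rpow_sub_two_div_two_mul_self (by positivity : 0 < 2 * K), mul_comm]
    exact mul_le_mul_of_nonneg_right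
      (Real.rpow_le_rpow_of_nonpos (by positivity) (by linarith) (by linarith)) (by positivity)
  have hz_pow : (1 + s) ^ (p / 2) ≤ e * z := by
    rw [Real.rpow_sub_two_div_two_mul_self hz]
    exact Real.rpow_le_rpow (by linarith) (by linarith) (by linarith)
  -- substitute `s = z - 1 - 2K`
  calc p * (1 + t) ^ ((p - 2) / 2) * (K - m / 2 * s) ≤ p * e * (K - m / 2 * s) :=
        mul_le_mul_of_nonpos_right he_le ha.le
    _ = p * (K + m / 2) * e + p / 2 * m * (2 * K * e) - m * p / 2 * (e * z) := by ring
    _ ≤ p * (K + m / 2) * 1 + 1 * m * (2 * K) ^ (p / 2) - m * p / 2 * (1 + s) ^ (p / 2) := by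
        gcongr
        linarith
    _ = _ := by ring

theorem lyapunov_scalar_bound (hp0 : 0 ≤ p) (hp2 : p ≤ 2) (hm : 0 < m) (hK : 0 < K)
    (hs : 0 ≤ s) {t c : ℝ} (ht0 : 0 ≤ t) (ht : t ≤ s + 2 * K) (hc : c ≤ K - m / 2 * s) :
    p * (1 + t) ^ ((p - 2) / 2) * c
      ≤ -(m * p / 2) * (1 + s) ^ (p / 2) + (p * (m / 2 + K) + m * (2 * K) ^ (p / 2)) := by
  refine (mul_le_mul_of_nonneg_left hc (by positivity)).trans ?_
  rcases le_or_gt 0 (K - m / 2 * s) with ha | ha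
  · exact lyapunov_scalar_bound_of_nonneg hp0 hp2 hm hK hs ht0 ha
  · exact lyapunov_scalar_bound_of_neg hp0 hp2 hm hK hs ht0 ht ha

end Scalar

section Drift

variable {E : Type*} [NormedAddCommGroup E] [InnerProductSpace ℝ E] {u b : E} {m K r : ℝ}

theorem inner_add_smul_le (hub : ⟪u, b⟫ ≤ K - m * ‖u‖ ^ 2) (hrb : r * ‖b‖ ^ 2 ≤ m / 2 * ‖u‖ ^ 2) :
    ⟪u + r • b, b⟫ ≤ K - m / 2 * ‖u‖ ^ 2 := by
  rw [inner_add_left, real_inner_smul_left, real_inner_self_eq_norm_sq]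
  linarith

theorem norm_add_smul_sq_le (hm : 0 ≤ m) (hK : 0 ≤ K) (hr0 : 0 ≤ r) (hr1 : r ≤ 1)
    (hub : ⟪u, b⟫ ≤ K - m * ‖u‖ ^ 2) (hrb : r * ‖b‖ ^ 2 ≤ m / 2 * ‖u‖ ^ 2) :
    ‖u + r • b‖ ^ 2 ≤ ‖u‖ ^ 2 + 2 * K := by
  rw [norm_add_sq_real, real_inner_smul_right, norm_smul, mul_pow, Real.norm_eq_abs, sq_abs]
  nlinarith [mul_le_mul_of_nonneg_left hub hr0, mul_le_mul_of_nonneg_left hrb hr0,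
    mul_nonneg hr0 (mul_nonneg hm (sq_nonneg ‖u‖))]

theorem lyapunov_integrand_le {p : ℝ} (hp0 : 0 ≤ p) (hp2 : p ≤ 2) (hm : 0 < m) (hK : 0 < K)
    (hr0 : 0 ≤ r) (hr1 : r ≤ 1)
    (hub : ⟪u, b⟫ ≤ K - m * ‖u‖ ^ 2) (hrb : r * ‖b‖ ^ 2 ≤ m / 2 * ‖u‖ ^ 2) :
    ⟪(p * (1 + ‖u + r • b‖ ^ 2) ^ ((p - 2) / 2)) • (u + r • b), b⟫
      ≤ -(m * p / 2) * (1 + ‖u‖ ^ 2) ^ (p / 2) + (p * (m / 2 + K) + m * (2 * K) ^ (p / 2)) := by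
  rw [real_inner_smul_left]
  exact lyapunov_scalar_bound hp0 hp2 hm hK (sq_nonneg _) (sq_nonneg _)
    (norm_add_smul_sq_le hm.le hK.le hr0 hr1 hub hrb) (inner_add_smul_le hub hrb)

theorem integral_lyapunov_le {p η : ℝ} (hp0 : 0 ≤ p) (hp2 : p ≤ 2) (hm : 0 < m) (hK : 0 < K)
    (hη0 : 0 ≤ η) (hη1 : η ≤ 1)
    (hub : ⟪u, b⟫ ≤ K - m * ‖u‖ ^ 2) (hηb : η * ‖b‖ ^ 2 ≤ m / 2 * ‖u‖ ^ 2) :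
    ∫ r in (0 : ℝ)..η, ⟪(p * (1 + ‖u + r • b‖ ^ 2) ^ ((p - 2) / 2)) • (u + r • b), b⟫
      ≤ η * (-(m * p / 2) * (1 + ‖u‖ ^ 2) ^ (p / 2)
        + (p * (m / 2 + K) + m * (2 * K) ^ (p / 2))) := by
  have hcont : Continuous fun r : ℝ =>
      ⟪(p * (1 + ‖u + r • b‖ ^ 2) ^ ((p - 2) / 2)) • (u + r • b), b⟫ := by
    have hweight : Continuous fun r : ℝ => (1 + ‖u + r • b‖ ^ 2) ^ ((p - 2) / 2) :=
      (by fun_prop : Continuous fun r : ℝ => 1 + ‖u + r • b‖ ^ 2).rpow_const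
        fun r => Or.inl (by positivity)
    fun_prop
  refine (intervalIntegral.integral_mono_on hη0 (hcont.intervalIntegrable _ _)
    intervalIntegrable_const fun r hr => lyapunov_integrand_le hp0 hp2 hm hK hr.1 (hr.2.trans hη1)
      hub ((mul_le_mul_of_nonneg_right hr.2 (sq_nonneg _)).trans hηb)).trans_eq ?_
  rw [intervalIntegral.integral_const, smul_eq_mul, sub_zero]

end Drift

theorem lyapunov_gradient_integral_bound_general
    {d : ℕ} {H : Type*} [NormedAddCommGroup H] [InnerProductSpace ℝ H]
    (𝒳 : Set H) (f : EuclideanSpace ℝ (Fin d) → H → ℝ)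
    (K₁ K₂ : ℝ) (hK₁ : 0 < K₁)
    (hA1 : ∀ (θ θ' : EuclideanSpace ℝ (Fin d)), ∀ x ∈ 𝒳, ∀ x' ∈ 𝒳,
      ‖gradient (fun ϑ => f ϑ x) θ - gradient (fun ϑ => f ϑ x') θ'‖ ≤
        K₁ * ‖θ - θ'‖ + K₂ * ‖x - x'‖ * (‖θ‖ + ‖θ'‖ + 1))
    (m K : ℝ) (hm : 0 < m) (hK : 0 < K)
    (hA2b : ∀ (θ₁ θ₂ : EuclideanSpace ℝ (Fin d)), ∀ x ∈ 𝒳,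
      m * ‖θ₁ - θ₂‖ ^ 2 - K ≤
        ⟪gradient (fun ϑ => f ϑ x) θ₁ - gradient (fun ϑ => f ϑ x) θ₂, θ₁ - θ₂⟫)
    (ϑstar : EuclideanSpace ℝ (Fin d))
    (hA3 : ∀ x ∈ 𝒳, gradient (fun ϑ => f ϑ x) ϑstar = 0)
    {n : ℕ} (hn : 0 < n) (X : Fin n → H) (hX : ∀ i, X i ∈ 𝒳)
    (p : ℝ) (hp1 : 1 ≤ p) (hp2 : p < 2)
    (η : ℝ) (hη0 : 0 < η) (hη : η ≤ min (m / (2 * K₁ ^ 2)) (min (1 / m) 1))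
    (θ : EuclideanSpace ℝ (Fin d))
    (bθ : EuclideanSpace ℝ (Fin d))
    (hbθ : bθ = -((n : ℝ)⁻¹ • ∑ j : Fin n, gradient (fun ϑ => f ϑ (X j)) θ)) :
    (∫ r in (0 : ℝ)..η,
        ⟪(p * (1 + ‖θ + r • bθ - ϑstar‖ ^ 2) ^ ((p - 2) / 2)) • (θ + r • bθ - ϑstar), bθ⟫)
      ≤ -(m * p * η / 2) * (1 + ‖θ - ϑstar‖ ^ 2) ^ (p / 2)
        + η * (p * (m / 2 + K) + m * (2 * K) ^ (p / 2)) := by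
  have : Nonempty (Fin n) := ⟨⟨0, hn⟩⟩
  set u := θ - ϑstar
  have hgrad_norm : ∀ j, gradient (fun ϑ => f ϑ (X j)) θ ∈ Metric.closedBall 0 (K₁ * ‖u‖) :=
    fun j => by simpa [hA3 _ (hX j)] using hA1 θ ϑstar (X j) (hX j) (X j) (hX j)
  have hgrad_inner : ∀ j, gradient (fun ϑ => f ϑ (X j)) θ ∈ {v | m * ‖u‖ ^ 2 - K ≤ ⟪u, v⟫} :=
    fun j => by
      have h := hA2b θ ϑstar (X j) (hX j)
      rwa [hA3 _ (hX j), sub_zero, real_inner_comm] at h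
  have hb_norm : ‖bθ‖ ≤ K₁ * ‖u‖ := by
    simpa [hbθ] using (convex_closedBall 0 _).inv_card_smul_sum_mem_s10 hgrad_norm
  have hub : ⟪u, bθ⟫ ≤ K - m * ‖u‖ ^ 2 := by
    have := (convex_halfSpace_ge (innerₛₗ ℝ u).isLinear _).inv_card_smul_sum_mem_s10 hgrad_inner
    simp only [Fintype.card_fin, Set.mem_ofPred_eq, innerₛₗ_apply_apply] at this
    rw [hbθ, inner_neg_right]
    linarith
  have hηK₁ : η * (2 * K₁ ^ 2) ≤ m := (le_div_iff₀ (by positivity)).1 (hη.trans (min_le_left _ _))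
  have hηb : η * ‖bθ‖ ^ 2 ≤ m / 2 * ‖u‖ ^ 2 :=
    calc η * ‖bθ‖ ^ 2 ≤ η * (K₁ * ‖u‖) ^ 2 := by gcongr
      _ = η * K₁ ^ 2 * ‖u‖ ^ 2 := by ring
      _ ≤ m / 2 * ‖u‖ ^ 2 := by gcongr; linarith
  have hη1 : η ≤ 1 := hη.trans ((min_le_right _ _).trans (min_le_right _ _))
  simp_rw [add_sub_right_comm θ _ ϑstar]
  refine (integral_lyapunov_le (by linarith) hp2.le hm hK hη0.le hη1 hub hηb).trans_eq ?_
  ring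

/-- Under Assumptions 1, 2 and 3, for `p ∈ [1,2)`,
`0 < η ≤ min(m/(2K₁²), 1/m, 1)` and drift `b(θ) = -∇F(θ,X)`,
`∫₀^η ⟨∇V_p(θ + r b(θ)), b(θ)⟩ dr ≤ -(mpη/2) V_p(θ) + η(p(m/2 + K) + m(2K)^{p/2})`,
where `V_p(θ) = (1 + ‖θ - ϑ⋆‖²)^{p/2}` and
`∇V_p(θ) = p (1 + ‖θ - ϑ⋆‖²)^{(p-2)/2} (θ - ϑ⋆)`. -/
theorem lyapunov_gradient_integral_bound
    {d : ℕ} {H : Type*} [NormedAddCommGroup H] [InnerProductSpace ℝ H]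
    (𝒳 : Set H) (f : EuclideanSpace ℝ (Fin d) → H → ℝ)
    (K₁ K₂ : ℝ) (hK₁ : 0 < K₁) (hK₂ : 0 < K₂)
    (hdiff : ∀ x ∈ 𝒳, Differentiable ℝ (fun θ => f θ x))
    (hA1 : ∀ (θ θ' : EuclideanSpace ℝ (Fin d)), ∀ x ∈ 𝒳, ∀ x' ∈ 𝒳,
      ‖gradient (fun ϑ => f ϑ x) θ - gradient (fun ϑ => f ϑ x') θ'‖ ≤
        K₁ * ‖θ - θ'‖ + K₂ * ‖x - x'‖ * (‖θ‖ + ‖θ'‖ + 1))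
    (B m K : ℝ) (hB : 0 < B) (hm : 0 < m) (hK : 0 < K)
    (hA2a : ∀ x ∈ 𝒳, ‖gradient (fun ϑ => f ϑ x) 0‖ ≤ B)
    (hA2b : ∀ (θ₁ θ₂ : EuclideanSpace ℝ (Fin d)), ∀ x ∈ 𝒳,
      m * ‖θ₁ - θ₂‖ ^ 2 - K ≤
        ⟪gradient (fun ϑ => f ϑ x) θ₁ - gradient (fun ϑ => f ϑ x) θ₂, θ₁ - θ₂⟫)
    (ϑstar : EuclideanSpace ℝ (Fin d))
    (hA3 : ∀ x ∈ 𝒳, gradient (fun ϑ => f ϑ x) ϑstar = 0)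
    {n : ℕ} (hn : 0 < n) (X : Fin n → H) (hX : ∀ i, X i ∈ 𝒳)
    (p : ℝ) (hp1 : 1 ≤ p) (hp2 : p < 2)
    (η : ℝ) (hη0 : 0 < η) (hη : η ≤ min (m / (2 * K₁ ^ 2)) (min (1 / m) 1))
    (θ : EuclideanSpace ℝ (Fin d))
    (bθ : EuclideanSpace ℝ (Fin d))
    (hbθ : bθ = -((n : ℝ)⁻¹ • ∑ j : Fin n, gradient (fun ϑ => f ϑ (X j)) θ)) :
    (∫ r in (0 : ℝ)..η,
        ⟪(p * (1 + ‖θ + r • bθ - ϑstar‖ ^ 2) ^ ((p - 2) / 2)) • (θ + r • bθ - ϑstar), bθ⟫)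
      ≤ -(m * p * η / 2) * (1 + ‖θ - ϑstar‖ ^ 2) ^ (p / 2)
        + η * (p * (m / 2 + K) + m * (2 * K) ^ (p / 2)) :=
  lyapunov_gradient_integral_bound_general 𝒳 f K₁ K₂ hK₁ hA1 m K hm hK hA2b ϑstar hA3 hn X hX p hp1
    hp2 η hη0 hη θ bθ hbθ
end

section
/- Let d ≥ 1, α ∈ (1,2), p ∈ [1, α), x ∈ ℝ^d, and let V_p : ℝ^d → ℝ be V_p(θ) = (1 + ‖θ − x‖²)^{p/2}. For θ ∈ ℝ^d define I₁(θ) = ∫_{‖y‖<1} ( ∫₀¹ ∫₀^r ⟨∇²V_p(θ + s y) y, y⟩ ds dr ) ‖y‖^{−(α+d)} dy and I₂(θ) = ∫_{‖y‖≥1} ( ∫₀¹ ⟨∇V_p(θ + r y), y⟩ dr ) ‖y‖^{−(α+d)} dy, where ∇²V_p denotes the Hessian of V_p. Then, with C_{d,α} := α 2^{α−1} π^{−d/2} Γ((d+α)/2)/Γ(1 − α/2) and 𝖢 := α 2^{α} Γ((d+α)/2)/(Γ(1 − α/2) Γ(d/2)), it holds for every θ ∈ ℝ^d that |C_{d,α}(I₁(θ)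 + I₂(θ))| ≤ 𝖢 ( p(√d + 2)/(2 − α) + (p/(α − 1)) ‖θ − x‖^{p−1} + 1/(α − p) ). -/
/-!
Both terms are bounded by integrating pointwise bounds in polar coordinates.
On the unit ball, the Hessian of `V_p` satisfies `|∇²V_p(ϑ)[y, y]| ≤ p ‖y‖²` for `1 ≤ p ≤ 2`
(its two parts, `p (1 + ‖w‖²)^{p/2-1} ‖y‖²` and `p (2 - p) (1 + ‖w‖²)^{p/2-2} ⟪w, y⟫²`, both lie
in `[0, p ‖y‖²]`), so the integrand of `I₁` is at most `(p/2) ‖y‖^{2-α-d}`, integrable since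
`α < 2`. Off the ball, the inner integral of `I₂` telescopes to `V_p(θ + y) - V_p(θ)`, which is at
most `p ‖θ - x‖^{p-1} ‖y‖ + ‖y‖^p`: the increments of `s ↦ (1 + s²)^{p/2}` are dominated by those
of `s ↦ s^p`, and `(a + t)^p - a^p ≤ p a^{p-1} t + t^p` by subadditivity of `s ↦ s^{p-1}`. Both
resulting powers of `‖y‖` are integrable off the ball since `p < α`. Each radial integral carries
the area `2 π^{d/2} / Γ(d/2)` of the unit sphere, which turns `C_{d,α}` into `𝖢`.
-/

open MeasureTheory Real Set Metric Module

section Scalar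

theorem hasDerivAt_one_add_sq_rpow (p s : ℝ) :
    HasDerivAt (fun s : ℝ => (1 + s ^ 2) ^ (p / 2)) (p * s * (1 + s ^ 2) ^ (p / 2 - 1)) s := by
  convert ((hasDerivAt_pow 2 s).const_add 1).rpow_const (p := p / 2) (Or.inl (by positivity))
    using 1
  push_cast
  ring

variable {p : ℝ}

theorem mul_one_add_sq_rpow_le (hp0 : 0 ≤ p) (hp2 : p ≤ 2) {s : ℝ} (hs : 0 < s) :
    p * s * (1 + s ^ 2) ^ (p / 2 - 1) ≤ p * s ^ (p - 1) :=
  calc p * s * (1 + s ^ 2) ^ (p / 2 - 1)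
      ≤ p * s * (s ^ 2) ^ (p / 2 - 1) :=
        mul_le_mul_of_nonneg_left
          (rpow_le_rpow_of_nonpos (by positivity) (by linarith) (by linarith)) (by positivity)
    _ = p * s ^ (p - 1) := by
        rw [← rpow_two, ← rpow_mul hs.le, show p - 1 = 1 + 2 * (p / 2 - 1) by ring,
          rpow_add hs, rpow_one, mul_assoc]

theorem monotoneOn_rpow_sub_one_add_sq_rpow (hp0 : 0 ≤ p) (hp2 : p ≤ 2) :
    MonotoneOn (fun s : ℝ => s ^ p - (1 + s ^ 2) ^ (p / 2)) (Ici 0) := by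
  refine monotoneOn_of_hasDerivWithinAt_nonneg (convex_Ici 0)
    (f' := fun s => p * s ^ (p - 1) - p * s * (1 + s ^ 2) ^ (p / 2 - 1)) ?_ (fun s hs => ?_)
    (fun s hs => ?_) <;> try rw [interior_Ici] at hs
  · exact ((continuous_rpow_const hp0).sub ((continuous_const.add (continuous_pow 2)).rpow_const
      fun _ => Or.inr (by positivity))).continuousOn
  · exact ((hasDerivAt_rpow_const (Or.inl (ne_of_gt hs))).sub
      (hasDerivAt_one_add_sq_rpow p s)).hasDerivWithinAt
  · exact sub_nonneg.2 (mul_one_add_sq_rpow_le hp0 hp2 hs)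

theorem rpow_sub_rpow_le_mul_sub (hp1 : 1 ≤ p) {a b : ℝ} (hb : 0 ≤ b) (hba : b ≤ a) :
    a ^ p - b ^ p ≤ p * a ^ (p - 1) * (a - b) := by
  have hmono : MonotoneOn (fun s : ℝ => p * a ^ (p - 1) * s - s ^ p) (Icc 0 a) := by
    refine monotoneOn_of_hasDerivWithinAt_nonneg (convex_Icc 0 a)
      (f' := fun s => p * a ^ (p - 1) - p * s ^ (p - 1)) ?_ (fun s hs => ?_)
      (fun s hs => ?_) <;> try rw [interior_Icc] at hs
    · exact ((continuous_const_mul _).sub (continuous_rpow_const (by linarith))).continuousOn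
    · exact (((hasDerivAt_id s).const_mul _).sub
        (hasDerivAt_rpow_const (Or.inl (ne_of_gt hs.1)))).hasDerivWithinAt.congr_deriv (by ring)
    · have := rpow_le_rpow hs.1.le hs.2.le (by linarith : 0 ≤ p - 1)
      nlinarith
  have := hmono ⟨hb, hba⟩ ⟨hb.trans hba, le_rfl⟩ hba
  simp only at this
  linarith

theorem add_rpow_sub_rpow_le (hp1 : 1 ≤ p) (hp2 : p ≤ 2) {a t : ℝ} (ha : 0 ≤ a) (ht : 0 ≤ t) :
    (a + t) ^ p - a ^ p ≤ p * a ^ (p - 1) * t + t ^ p := by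
  have hmono : MonotoneOn (fun t : ℝ => p * a ^ (p - 1) * t + t ^ p - (a + t) ^ p) (Ici 0) := by
    refine monotoneOn_of_hasDerivWithinAt_nonneg (convex_Ici 0)
      (f' := fun t => p * a ^ (p - 1) + p * t ^ (p - 1) - p * (a + t) ^ (p - 1)) ?_
      (fun t ht => ?_) (fun t ht => ?_) <;> try rw [interior_Ici] at ht
    · refine (((continuous_const_mul _).add (continuous_rpow_const (by linarith))).sub
        ((continuous_const.add continuous_id).rpow_const fun _ => ?_)).continuousOn
      exact Or.inr (by linarith)
    · have hat : a + t ≠ 0 := (add_pos_of_nonneg_of_pos ha ht).ne'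
      exact ((((hasDerivAt_id t).const_mul _).add
        (hasDerivAt_rpow_const (Or.inl (ne_of_gt ht)))).sub
        (((hasDerivAt_id t).const_add a).rpow_const (Or.inl hat))).hasDerivWithinAt.congr_deriv
        (by simp only [id]; ring)
    · have := rpow_add_le_add_rpow ha (le_of_lt ht) (by linarith : 0 ≤ p - 1) (by linarith)
      have hp0 : 0 ≤ p := by linarith
      nlinarith
  have := hmono self_mem_Ici ht ht
  simp only [mul_zero, add_zero, zero_rpow (by linarith : p ≠ 0)] at this
  linarith

theorem abs_one_add_sq_rpow_sub_le (hp1 : 1 ≤ p) (hp2 : p ≤ 2) {a b t : ℝ} (ha : 0 ≤ a)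
    (hb : 0 ≤ b) (hab : |b - a| ≤ t) :
    |(1 + b ^ 2) ^ (p / 2) - (1 + a ^ 2) ^ (p / 2)| ≤ p * a ^ (p - 1) * t + t ^ p := by
  have ht : 0 ≤ t := (abs_nonneg _).trans hab
  have hp0 : 0 < p := by linarith
  have hmono := monotoneOn_rpow_sub_one_add_sq_rpow hp0.le hp2
  rcases le_total a b with hle | hle
  · have hh : (1 + a ^ 2) ^ (p / 2) ≤ (1 + b ^ 2) ^ (p / 2) := by gcongr
    have hbt : b ≤ a + t := by linarith [le_abs_self (b - a)]
    have := hmono ha hb hle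
    simp only at this
    rw [abs_of_nonneg (sub_nonneg.2 hh)]
    linarith [add_rpow_sub_rpow_le hp1 hp2 ha ht, rpow_le_rpow hb hbt hp0.le]
  · have hh : (1 + b ^ 2) ^ (p / 2) ≤ (1 + a ^ 2) ^ (p / 2) := by gcongr
    have hat : a - b ≤ t := by linarith [neg_abs_le (b - a)]
    have := hmono hb ha hle
    simp only at this
    rw [abs_of_nonpos (sub_nonpos.2 hh)]
    have : p * a ^ (p - 1) * (a - b) ≤ p * a ^ (p - 1) * t := by gcongr
    linarith [rpow_sub_rpow_le_mul_sub hp1 hb hle, rpow_nonneg ht p]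

theorem abs_one_add_norm_sub_sq_rpow_add_sub_le {E : Type*} [SeminormedAddCommGroup E]
    (hp1 : 1 ≤ p) (hp2 : p ≤ 2) (x θ y : E) :
    |(1 + ‖θ + y - x‖ ^ 2) ^ (p / 2) - (1 + ‖θ - x‖ ^ 2) ^ (p / 2)|
      ≤ p * ‖θ - x‖ ^ (p - 1) * ‖y‖ + ‖y‖ ^ p :=
  abs_one_add_sq_rpow_sub_le hp1 hp2 (norm_nonneg _) (norm_nonneg _)
    ((abs_norm_sub_norm_le _ _).trans_eq (by rw [add_sub_right_comm, add_sub_cancel_left]))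

end Scalar

theorem integral_fderiv_line_eq_sub {F : Type*} [NormedAddCommGroup F] [NormedSpace ℝ F]
    [CompleteSpace F] {E : Type*} [NormedAddCommGroup E] [NormedSpace ℝ E] {f : E → F}
    (hf : ContDiff ℝ 1 f) (θ y : E) :
    ∫ r in (0 : ℝ)..1, fderiv ℝ f (θ + r • y) y = f (θ + y) - f θ := by
  have hline (r : ℝ) : HasDerivAt (fun r : ℝ => θ + r • y) y r := by
    simpa using ((hasDerivAt_id r).smul_const y).const_add θ
  have hcont : Continuous fun r : ℝ => fderiv ℝ f (θ + r • y) y :=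
    ((hf.continuous_fderiv one_ne_zero).comp
      (continuous_const.add (continuous_id.smul continuous_const))).clm_apply continuous_const
  rw [intervalIntegral.integral_eq_sub_of_hasDerivAt
    (fun r _ => ((hf.differentiable one_ne_zero _).hasFDerivAt.comp_hasDerivAt r (hline r)))
    (hcont.intervalIntegrable 0 1)]
  simp

section Lyapunov

variable {E : Type*} [NormedAddCommGroup E] [InnerProductSpace ℝ E] (x : E)

theorem hasFDerivAt_one_add_norm_sub_sq_rpow (q : ℝ) (ϑ : E) :
    HasFDerivAt (fun ϑ : E => (1 + ‖ϑ - x‖ ^ 2) ^ q)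
      ((2 * q * (1 + ‖ϑ - x‖ ^ 2) ^ (q - 1)) • innerSL ℝ (ϑ - x)) ϑ := by
  have h := (((hasFDerivAt_id ϑ).sub_const x).norm_sq.const_add 1).rpow_const (p := q)
    (Or.inl (by positivity))
  refine h.congr_fderiv ?_
  rw [ContinuousLinearMap.comp_id, ← Nat.cast_smul_eq_nsmul ℝ, smul_smul]
  simp only [id]
  congr 1
  push_cast
  ring

theorem fderiv_one_add_norm_sub_sq_rpow (p : ℝ) :
    fderiv ℝ (fun ϑ : E => (1 + ‖ϑ - x‖ ^ 2) ^ (p / 2)) =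
      fun ϑ => (p * (1 + ‖ϑ - x‖ ^ 2) ^ (p / 2 - 1)) • innerSL ℝ (ϑ - x) := by
  ext ϑ : 1
  convert (hasFDerivAt_one_add_norm_sub_sq_rpow x (p / 2) ϑ).fderiv using 3
  ring

theorem contDiff_one_add_norm_sub_sq_rpow (q : ℝ) {n : WithTop ℕ∞} :
    ContDiff ℝ n (fun ϑ : E => (1 + ‖ϑ - x‖ ^ 2) ^ q) :=
  (contDiff_const.add ((contDiff_id.sub contDiff_const).norm_sq ℝ)).rpow_const_of_ne
    fun _ => by positivity

theorem iteratedFDeriv_two_one_add_norm_sub_sq_rpow (p : ℝ) (ϑ y : E) :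
    iteratedFDeriv ℝ 2 (fun ϑ : E => (1 + ‖ϑ - x‖ ^ 2) ^ (p / 2)) ϑ ![y, y] =
      p * (1 + ‖ϑ - x‖ ^ 2) ^ (p / 2 - 1) * ‖y‖ ^ 2
        - p * (2 - p) * (1 + ‖ϑ - x‖ ^ 2) ^ (p / 2 - 2) * inner ℝ (ϑ - x) y ^ 2 := by
  have hc := (hasFDerivAt_one_add_norm_sub_sq_rpow x (p / 2 - 1) ϑ).const_mul p
  have hL : HasFDerivAt (fun ϑ : E => innerSL ℝ (ϑ - x)) (innerSL ℝ) ϑ := by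
    have h := (innerSL ℝ).hasFDerivAt.comp ϑ ((hasFDerivAt_id ϑ).sub_const x)
    rwa [ContinuousLinearMap.comp_id] at h
  have hD : HasFDerivAt
      (fun ϑ : E => (p * (1 + ‖ϑ - x‖ ^ 2) ^ (p / 2 - 1)) • innerSL ℝ (ϑ - x)) _ ϑ :=
    hc.smul hL
  rw [iteratedFDeriv_two_apply, fderiv_one_add_norm_sub_sq_rpow, hD.fderiv]
  simp only [Matrix.cons_val_zero, Matrix.cons_val_one, add_apply,
    smul_apply, ContinuousLinearMap.smulRight_apply, smul_eq_mul,
    innerSL_apply_apply]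
  have hyy : innerSL ℝ y y = ‖y‖ ^ 2 := real_inner_self_eq_norm_sq y
  rw [hyy, show p / 2 - 1 - 1 = p / 2 - 2 by ring]
  ring

theorem abs_iteratedFDeriv_two_one_add_norm_sub_sq_rpow_le {p : ℝ} (hp1 : 1 ≤ p) (hp2 : p ≤ 2)
    (ϑ y : E) :
    |iteratedFDeriv ℝ 2 (fun ϑ : E => (1 + ‖ϑ - x‖ ^ 2) ^ (p / 2)) ϑ ![y, y]| ≤ p * ‖y‖ ^ 2 := by
  rw [iteratedFDeriv_two_one_add_norm_sub_sq_rpow]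
  set w := ϑ - x
  set A := (1 + ‖w‖ ^ 2) ^ (p / 2 - 1)
  set B := (1 + ‖w‖ ^ 2) ^ (p / 2 - 2)
  have hA0 : 0 ≤ A := by positivity
  have hB0 : 0 ≤ B := by positivity
  have hA1 : A ≤ 1 := rpow_le_one_of_one_le_of_nonpos (by nlinarith) (by linarith)
  have hBw : B * ‖w‖ ^ 2 ≤ A := by
    have hBA : B * (1 + ‖w‖ ^ 2) = A := by
      rw [← rpow_add_one (by positivity), show p / 2 - 2 + 1 = p / 2 - 1 by ring]
    nlinarith
  have hinner : inner ℝ w y ^ 2 ≤ ‖w‖ ^ 2 * ‖y‖ ^ 2 := by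
    rw [← mul_pow]
    exact sq_le_sq' (neg_le_of_abs_le (abs_real_inner_le_norm w y)) (real_inner_le_norm w y)
  have hp0 : 0 ≤ p := by linarith
  refine abs_sub_le_of_nonneg_of_le (by positivity)
    (mul_le_mul_of_nonneg_right (mul_le_of_le_one_right hp0 hA1) (sq_nonneg _))
    (mul_nonneg (mul_nonneg (mul_nonneg hp0 (sub_nonneg.2 hp2)) hB0) (sq_nonneg _)) ?_
  calc p * (2 - p) * B * inner ℝ w y ^ 2 ≤ p * (2 - p) * (B * ‖w‖ ^ 2) * ‖y‖ ^ 2 := by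
        have : 0 ≤ p * (2 - p) * B := by positivity
        nlinarith
    _ ≤ p * (2 - p) * A * ‖y‖ ^ 2 := by gcongr
    _ ≤ p * ‖y‖ ^ 2 := by
        have : (2 - p) * A ≤ 1 := by nlinarith
        nlinarith [mul_le_mul_of_nonneg_left this hp0, sq_nonneg ‖y‖]

end Lyapunov

theorem pow_sub_one_mul_rpow {r : ℝ} (hr : 0 < r) {n : ℕ} (hn : 0 < n) (q : ℝ) :
    r ^ (n - 1) * r ^ q = r ^ ((n : ℝ) - 1 + q) := by
  rw [rpow_add hr, ← rpow_natCast, Nat.cast_sub hn, Nat.cast_one]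

section Radial

variable {E : Type*} [NormedAddCommGroup E] [NormedSpace ℝ E] [FiniteDimensional ℝ E]
  [MeasurableSpace E] [BorelSpace E] [Nontrivial E] (μ : Measure E) [μ.IsAddHaarMeasure]

theorem integrableOn_norm_preimage_iff {A : Set ℝ} (hA : MeasurableSet A) (g : ℝ → ℝ) :
    IntegrableOn (fun y : E => g ‖y‖) {y | ‖y‖ ∈ A} μ ↔
      IntegrableOn (fun r => r ^ (finrank ℝ E - 1) * g r) (Ioi 0 ∩ A) := by
  have hind : ({y : E | ‖y‖ ∈ A}.indicator fun y => g ‖y‖) = fun y => A.indicator g ‖y‖ :=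
    funext fun _ => indicator_comp_right (fun y : E => ‖y‖)
  rw [← integrable_indicator_iff (show MeasurableSet {y : E | ‖y‖ ∈ A} from measurable_norm hA),
    hind, integrable_fun_norm_addHaar, inter_comm, ← integrableOn_indicator_iff hA]
  congr! 1
  ext r
  exact (indicator_mul_right A (fun r => r ^ (finrank ℝ E - 1)) g).symm

theorem setIntegral_norm_preimage {A : Set ℝ} (hA : MeasurableSet A) (g : ℝ → ℝ) :
    ∫ y in {y : E | ‖y‖ ∈ A}, g ‖y‖ ∂μ =
      finrank ℝ E * μ.real (ball 0 1) * ∫ r in Ioi 0 ∩ A, r ^ (finrank ℝ E - 1) * g r := by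
  have hind : ({y : E | ‖y‖ ∈ A}.indicator fun y => g ‖y‖) = fun y => A.indicator g ‖y‖ :=
    funext fun _ => indicator_comp_right (fun y : E => ‖y‖)
  rw [← integral_indicator (show MeasurableSet {y : E | ‖y‖ ∈ A} from measurable_norm hA), hind,
    integral_fun_norm_addHaar, ← setIntegral_indicator hA]
  simp_rw [nsmul_eq_mul, smul_eq_mul, indicator_mul_right, mul_assoc]

theorem integrableOn_norm_rpow_iff {A : Set ℝ} (hA : MeasurableSet A) (q : ℝ) :
    IntegrableOn (fun y : E => ‖y‖ ^ q) {y | ‖y‖ ∈ A} μ ↔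
      IntegrableOn (fun r : ℝ => r ^ ((finrank ℝ E : ℝ) - 1 + q)) (Ioi 0 ∩ A) := by
  rw [integrableOn_norm_preimage_iff μ hA fun r => r ^ q]
  exact integrableOn_congr_fun (fun r hr => pow_sub_one_mul_rpow hr.1 finrank_pos q)
    (measurableSet_Ioi.inter hA)

theorem setIntegral_norm_rpow {A : Set ℝ} (hA : MeasurableSet A) (q : ℝ) :
    ∫ y in {y : E | ‖y‖ ∈ A}, ‖y‖ ^ q ∂μ =
      finrank ℝ E * μ.real (ball 0 1) * ∫ r in Ioi 0 ∩ A, r ^ ((finrank ℝ E : ℝ) - 1 + q) := by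
  rw [setIntegral_norm_preimage μ hA fun r => r ^ q,
    setIntegral_congr_fun (measurableSet_Ioi.inter hA)
      (fun r hr => pow_sub_one_mul_rpow hr.1 finrank_pos q)]

variable {q : ℝ}

theorem integrableOn_norm_rpow_lt_one (hq : -(finrank ℝ E : ℝ) < q) :
    IntegrableOn (fun y : E => ‖y‖ ^ q) {y | ‖y‖ < 1} μ := by
  refine (integrableOn_norm_rpow_iff μ measurableSet_Iio q).2 ?_
  rw [Ioi_inter_Iio]
  exact ((intervalIntegrable_iff_integrableOn_Ioc_of_le zero_le_one).1
    (intervalIntegral.intervalIntegrable_rpow' (by linarith))).mono_set Ioo_subset_Ioc_self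

theorem setIntegral_norm_rpow_lt_one (hq : -(finrank ℝ E : ℝ) < q) :
    ∫ y in {y : E | ‖y‖ < 1}, ‖y‖ ^ q ∂μ = finrank ℝ E * μ.real (ball 0 1) / (finrank ℝ E + q) := by
  change ∫ y in {y : E | ‖y‖ ∈ Iio 1}, ‖y‖ ^ q ∂μ = _
  rw [setIntegral_norm_rpow μ measurableSet_Iio, Ioi_inter_Iio, ← integral_Ioc_eq_integral_Ioo,
    ← intervalIntegral.integral_of_le zero_le_one, integral_rpow (Or.inl (by linarith)),
    one_rpow, zero_rpow (by linarith),
    show (finrank ℝ E : ℝ) - 1 + q + 1 = finrank ℝ E + q by ring]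
  ring

theorem integrableOn_norm_rpow_one_le (hq : q < -(finrank ℝ E : ℝ)) :
    IntegrableOn (fun y : E => ‖y‖ ^ q) {y | 1 ≤ ‖y‖} μ := by
  refine (integrableOn_norm_rpow_iff μ measurableSet_Ici q).2 ?_
  rw [inter_eq_right.2 (Ici_subset_Ioi.2 one_pos), integrableOn_Ici_iff_integrableOn_Ioi]
  exact integrableOn_Ioi_rpow_of_lt (by linarith) one_pos

theorem setIntegral_norm_rpow_one_le (hq : q < -(finrank ℝ E : ℝ)) :
    ∫ y in {y : E | 1 ≤ ‖y‖}, ‖y‖ ^ q ∂μ =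
      finrank ℝ E * μ.real (ball 0 1) / -(finrank ℝ E + q) := by
  change ∫ y in {y : E | ‖y‖ ∈ Ici 1}, ‖y‖ ^ q ∂μ = _
  rw [setIntegral_norm_rpow μ measurableSet_Ici, inter_eq_right.2 (Ici_subset_Ioi.2 one_pos),
    integral_Ici_eq_integral_Ioi, integral_Ioi_rpow_of_lt (by linarith) one_pos, one_rpow,
    show (finrank ℝ E : ℝ) - 1 + q + 1 = finrank ℝ E + q by ring, div_neg, neg_div]
  ring

end Radial

theorem abs_intervalIntegral_intervalIntegral_le {f : ℝ → ℝ} {M : ℝ} (hf : ∀ s, |f s| ≤ M) :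
    |∫ r in (0 : ℝ)..1, ∫ s in (0 : ℝ)..r, f s| ≤ M / 2 := by
  have hinner : ∀ r ∈ Ioc (0 : ℝ) 1, ‖∫ s in (0 : ℝ)..r, f s‖ ≤ M * r := fun r hr => by
    simpa [abs_of_pos hr.1] using
      intervalIntegral.norm_integral_le_of_norm_le_const (a := 0) (b := r) (f := f)
        fun s _ => (Real.norm_eq_abs _).trans_le (hf s)
  calc |∫ r in (0 : ℝ)..1, ∫ s in (0 : ℝ)..r, f s| ≤ ∫ r in (0 : ℝ)..1, M * r :=
        intervalIntegral.norm_integral_le_of_norm_le zero_le_one (ae_of_all _ hinner)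
          ((continuous_const_mul M).intervalIntegrable 0 1)
    _ = M / 2 := by
        rw [intervalIntegral.integral_const_mul, integral_id]
        ring

section FractionalLaplacian

variable {E : Type*} [NormedAddCommGroup E] [InnerProductSpace ℝ E] [FiniteDimensional ℝ E]
  [MeasurableSpace E] [BorelSpace E] (μ : Measure E)

-- `I₁` and `I₂` in `(-Δ)^{α/2} f = C_{d,α} (I₁ + I₂)`, with `d = finrank ℝ E`.
noncomputable def fracLaplacianBallTerm (α : ℝ) (f : E → ℝ) (θ : E) : ℝ :=
  ∫ y in {y : E | ‖y‖ < 1},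
    (∫ r in (0 : ℝ)..1, ∫ s in (0 : ℝ)..r, iteratedFDeriv ℝ 2 f (θ + s • y) ![y, y])
      * ‖y‖ ^ (-(α + finrank ℝ E)) ∂μ

noncomputable def fracLaplacianTailTerm (α : ℝ) (f : E → ℝ) (θ : E) : ℝ :=
  ∫ y in {y : E | 1 ≤ ‖y‖},
    (∫ r in (0 : ℝ)..1, fderiv ℝ f (θ + r • y) y) * ‖y‖ ^ (-(α + finrank ℝ E)) ∂μ

variable [Nontrivial E] [μ.IsAddHaarMeasure] {p α : ℝ}

theorem abs_fracLaplacianBallTerm_le (hp1 : 1 ≤ p) (hp2 : p ≤ 2) (hα2 : α < 2) (x θ : E) :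
    |fracLaplacianBallTerm μ α (fun ϑ => (1 + ‖ϑ - x‖ ^ 2) ^ (p / 2)) θ|
      ≤ finrank ℝ E * μ.real (ball 0 1) * (p / 2 / (2 - α)) := by
  have hq : -(finrank ℝ E : ℝ) < 2 - α - finrank ℝ E := by linarith
  have hbound (y : E) :
      ‖(∫ r in (0 : ℝ)..1, ∫ s in (0 : ℝ)..r,
          iteratedFDeriv ℝ 2 (fun ϑ => (1 + ‖ϑ - x‖ ^ 2) ^ (p / 2)) (θ + s • y) ![y, y])
        * ‖y‖ ^ (-(α + finrank ℝ E))‖ ≤ p / 2 * ‖y‖ ^ (2 - α - finrank ℝ E) := by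
    rw [norm_mul, norm_of_nonneg (rpow_nonneg (norm_nonneg y) _), Real.norm_eq_abs]
    calc _ ≤ p * ‖y‖ ^ 2 / 2 * ‖y‖ ^ (-(α + finrank ℝ E)) := by
          gcongr
          exact abs_intervalIntegral_intervalIntegral_le fun s =>
            abs_iteratedFDeriv_two_one_add_norm_sub_sq_rpow_le x hp1 hp2 _ y
      _ = p / 2 * (‖y‖ ^ (2 : ℝ) * ‖y‖ ^ (-(α + finrank ℝ E))) := by rw [rpow_two]; ring
      _ ≤ p / 2 * ‖y‖ ^ (2 - α - finrank ℝ E) := by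
          gcongr
          exact (le_rpow_add (norm_nonneg y) _ _).trans_eq (by ring_nf)
  calc _ ≤ ∫ y in {y : E | ‖y‖ < 1}, p / 2 * ‖y‖ ^ (2 - α - finrank ℝ E) ∂μ :=
        norm_integral_le_of_norm_le ((integrableOn_norm_rpow_lt_one μ hq).const_mul _)
          (ae_of_all _ hbound)
    _ = _ := by
        rw [integral_const_mul, setIntegral_norm_rpow_lt_one μ hq,
          show (finrank ℝ E : ℝ) + (2 - α - finrank ℝ E) = 2 - α by ring]
        ring

theorem abs_fracLaplacianTailTerm_le (hp1 : 1 ≤ p) (hp2 : p ≤ 2) (hpα : p < α) (x θ : E) :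
    |fracLaplacianTailTerm μ α (fun ϑ => (1 + ‖ϑ - x‖ ^ 2) ^ (p / 2)) θ|
      ≤ finrank ℝ E * μ.real (ball 0 1) * (p / (α - 1) * ‖θ - x‖ ^ (p - 1) + 1 / (α - p)) := by
  have hq₁ : 1 - α - finrank ℝ E < -(finrank ℝ E : ℝ) := by linarith
  have hq₂ : p - α - finrank ℝ E < -(finrank ℝ E : ℝ) := by linarith
  set a := ‖θ - x‖
  have hbound (y : E) :
      ‖((1 + ‖θ + y - x‖ ^ 2) ^ (p / 2) - (1 + ‖θ - x‖ ^ 2) ^ (p / 2))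
        * ‖y‖ ^ (-(α + finrank ℝ E))‖
        ≤ p * a ^ (p - 1) * ‖y‖ ^ (1 - α - finrank ℝ E) + ‖y‖ ^ (p - α - finrank ℝ E) := by
    rw [norm_mul, norm_of_nonneg (rpow_nonneg (norm_nonneg y) _), Real.norm_eq_abs]
    calc _ ≤ (p * a ^ (p - 1) * ‖y‖ ^ (1 : ℝ) + ‖y‖ ^ p) * ‖y‖ ^ (-(α + finrank ℝ E)) := by
          gcongr
          rw [rpow_one]
          exact abs_one_add_norm_sub_sq_rpow_add_sub_le hp1 hp2 x θ y
      _ = p * a ^ (p - 1) * (‖y‖ ^ (1 : ℝ) * ‖y‖ ^ (-(α + finrank ℝ E)))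
            + ‖y‖ ^ p * ‖y‖ ^ (-(α + finrank ℝ E)) := by ring
      _ ≤ _ := by
          gcongr
          · exact (le_rpow_add (norm_nonneg y) _ _).trans_eq (by ring_nf)
          · exact (le_rpow_add (norm_nonneg y) _ _).trans_eq (by ring_nf)
  have hint₁ := (integrableOn_norm_rpow_one_le μ hq₁).const_mul (p * a ^ (p - 1))
  have hint₂ := integrableOn_norm_rpow_one_le μ hq₂
  unfold fracLaplacianTailTerm
  simp_rw [integral_fderiv_line_eq_sub (contDiff_one_add_norm_sub_sq_rpow x (p / 2))]
  calc _ ≤ ∫ y in {y : E | 1 ≤ ‖y‖},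
        p * a ^ (p - 1) * ‖y‖ ^ (1 - α - finrank ℝ E) + ‖y‖ ^ (p - α - finrank ℝ E) ∂μ :=
        norm_integral_le_of_norm_le (hint₁.add hint₂) (ae_of_all _ hbound)
    _ = _ := by
        rw [integral_add hint₁ hint₂, integral_const_mul, setIntegral_norm_rpow_one_le μ hq₁,
          setIntegral_norm_rpow_one_le μ hq₂,
          show -((finrank ℝ E : ℝ) + (1 - α - finrank ℝ E)) = α - 1 by ring,
          show -((finrank ℝ E : ℝ) + (p - α - finrank ℝ E)) = α - p by ring]
        ring

theorem abs_fracLaplacianBallTerm_add_tailTerm_le (hp1 : 1 ≤ p) (hpα : p < α) (hα2 : α < 2)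
    (x θ : E) :
    |fracLaplacianBallTerm μ α (fun ϑ => (1 + ‖ϑ - x‖ ^ 2) ^ (p / 2)) θ
        + fracLaplacianTailTerm μ α (fun ϑ => (1 + ‖ϑ - x‖ ^ 2) ^ (p / 2)) θ|
      ≤ finrank ℝ E * μ.real (ball 0 1)
          * (p / 2 / (2 - α) + p / (α - 1) * ‖θ - x‖ ^ (p - 1) + 1 / (α - p)) := by
  have hp2 : p ≤ 2 := by linarith
  refine (abs_add_le _ _).trans ((add_le_add (abs_fracLaplacianBallTerm_le μ hp1 hp2 hα2 x θ)
    (abs_fracLaplacianTailTerm_le μ hp1 hp2 hpα x θ)).trans_eq ?_)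
  ring

end FractionalLaplacian

theorem finrank_mul_volume_real_ball_zero_one {E : Type*} [NormedAddCommGroup E]
    [InnerProductSpace ℝ E] [FiniteDimensional ℝ E] [MeasurableSpace E] [BorelSpace E]
    [Nontrivial E] :
    (finrank ℝ E : ℝ) * volume.real (ball (0 : E) 1)
      = 2 * π ^ ((finrank ℝ E : ℝ) / 2) / Gamma ((finrank ℝ E : ℝ) / 2) := by
  have hn : (0 : ℝ) < finrank ℝ E := Nat.cast_pos.2 finrank_pos
  rw [Measure.real, InnerProductSpace.volume_ball, ENNReal.ofReal_one, one_pow, one_mul,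
    ENNReal.toReal_ofReal (by positivity), sqrt_eq_rpow, ← rpow_natCast, ← rpow_mul pi_pos.le,
    Gamma_add_one (by positivity)]
  field_simp

theorem fracLaplacian_constant_mul_sphere_area (d α : ℝ) :
    α * 2 ^ (α - 1) * π ^ (-d / 2) * (Gamma ((d + α) / 2) / Gamma (1 - α / 2))
        * (2 * π ^ (d / 2) / Gamma (d / 2))
      = α * 2 ^ α * Gamma ((d + α) / 2) / (Gamma (1 - α / 2) * Gamma (d / 2)) := by
  have hπ : π ^ (d / 2) ≠ 0 := (rpow_pos_of_pos pi_pos _).ne'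
  rw [neg_div, rpow_neg pi_pos.le, rpow_sub_one two_ne_zero]
  field_simp

theorem fractional_laplacian_lyapunov_bound_general
    {d : ℕ} (hd : 1 ≤ d) (α p : ℝ) (hα2 : α < 2)
    (hp1 : 1 ≤ p) (hpα : p < α)
    (x θ : EuclideanSpace ℝ (Fin d)) :
    |(α * (2 : ℝ) ^ (α - 1) * π ^ (-(d : ℝ) / 2) *
        (Gamma ((d + α) / 2) / Gamma (1 - α / 2))) *
      ((∫ y in {y : EuclideanSpace ℝ (Fin d) | ‖y‖ < 1},
          (∫ r in (0 : ℝ)..1, ∫ s in (0 : ℝ)..r,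
            iteratedFDeriv ℝ 2 (fun ϑ => (1 + ‖ϑ - x‖ ^ 2) ^ (p / 2)) (θ + s • y) ![y, y])
            * ‖y‖ ^ (-(α + d)))
        + (∫ y in {y : EuclideanSpace ℝ (Fin d) | 1 ≤ ‖y‖},
            (∫ r in (0 : ℝ)..1,
              fderiv ℝ (fun ϑ => (1 + ‖ϑ - x‖ ^ 2) ^ (p / 2)) (θ + r • y) y)
              * ‖y‖ ^ (-(α + d))))|
      ≤ (α * (2 : ℝ) ^ α * Gamma ((d + α) / 2) / (Gamma (1 - α / 2) * Gamma (d / 2))) *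
          (p * (Real.sqrt d + 2) / (2 - α) + (p / (α - 1)) * ‖θ - x‖ ^ (p - 1)
            + 1 / (α - p)) := by
  have hα : 0 < α := by linarith
  have : Nonempty (Fin d) := ⟨⟨0, hd⟩⟩
  have hn : finrank ℝ (EuclideanSpace ℝ (Fin d)) = d := finrank_euclideanSpace_fin
  have hω := finrank_mul_volume_real_ball_zero_one (E := EuclideanSpace ℝ (Fin d))
  have key := abs_fracLaplacianBallTerm_add_tailTerm_le volume hp1 hpα hα2 x θ
  simp only [fracLaplacianBallTerm, fracLaplacianTailTerm, hn] at key hω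
  rw [hω] at key
  have hΓ₂ : 0 < Gamma (1 - α / 2) := Gamma_pos_of_pos (by linarith)
  rw [abs_mul, abs_of_pos (by positivity)]
  refine (mul_le_mul_of_nonneg_left key (by positivity)).trans ?_
  rw [← mul_assoc, fracLaplacian_constant_mul_sphere_area]
  gcongr
  nlinarith [sqrt_nonneg (d : ℝ)]

/-- Bound on the integral-decomposition representation of the fractional
Laplacian `(-Δ)^{α/2} V_p(θ)` of the Lyapunov function `V_p(θ) = (1 + ‖θ - x‖²)^{p/2}`,
for `α ∈ (1,2)` and `p ∈ [1, α)`. -/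
theorem fractional_laplacian_lyapunov_bound
    {d : ℕ} (hd : 1 ≤ d) (α p : ℝ) (hα1 : 1 < α) (hα2 : α < 2)
    (hp1 : 1 ≤ p) (hpα : p < α)
    (x θ : EuclideanSpace ℝ (Fin d)) :
    |(α * (2 : ℝ) ^ (α - 1) * π ^ (-(d : ℝ) / 2) *
        (Gamma ((d + α) / 2) / Gamma (1 - α / 2))) *
      ((∫ y in {y : EuclideanSpace ℝ (Fin d) | ‖y‖ < 1},
          (∫ r in (0 : ℝ)..1, ∫ s in (0 : ℝ)..r,
            iteratedFDeriv ℝ 2 (fun ϑ => (1 + ‖ϑ - x‖ ^ 2) ^ (p / 2)) (θ + s • y) ![y, y])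
            * ‖y‖ ^ (-(α + d)))
        + (∫ y in {y : EuclideanSpace ℝ (Fin d) | 1 ≤ ‖y‖},
            (∫ r in (0 : ℝ)..1,
              fderiv ℝ (fun ϑ => (1 + ‖ϑ - x‖ ^ 2) ^ (p / 2)) (θ + r • y) y)
              * ‖y‖ ^ (-(α + d))))|
      ≤ (α * (2 : ℝ) ^ α * Gamma ((d + α) / 2) / (Gamma (1 - α / 2) * Gamma (d / 2))) *
          (p * (Real.sqrt d + 2) / (2 - α) + (p / (α - 1)) * ‖θ - x‖ ^ (p - 1)
            + 1 / (α - p)) :=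
  fractional_laplacian_lyapunov_bound_general hd α p hα2 hp1 hpα x θ
end

section
/- Let d ≥ 1, α ∈ (1,2), p ∈ [1, α), x ∈ ℝ^d, and let V_p : ℝ^d → ℝ be V_p(θ) = (1 + ‖θ − x‖²)^{p/2}. Then for every θ ∈ ℝ^d: (i) ‖∇V_p(θ)‖ ≤ p ‖θ − x‖^{p−1}, and (ii) the Frobenius norm of the Hessian satisfies ‖∇²V_p(θ)‖_F ≤ p(√d + 2). -/
/-! With `u = θ - x` and `s = 1 + ‖u‖²`, the gradient of `s ^ q` is `2q s^(q-1) u` and its Hessian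
is `2q s^(q-1) I + 4q(q-1) s^(q-2) u uᵀ`. For `q = p/2 ≤ 1` the factor `s^(q-1) ≤ (‖u‖²)^(q-1)`
gives the gradient bound. For the Hessian, the triangle inequality for the Frobenius norm gives
`√d · 2q s^(q-1) + 4q(1-q) s^(q-2) ‖u‖²`, and `s^(q-2) ‖u‖² ≤ s^(q-1) ≤ 1` since `‖u‖² ≤ s` and
`s ≥ 1`. -/

open Real

section RpowOneAddNormSq

variable {E : Type*} [NormedAddCommGroup E] [InnerProductSpace ℝ E]

theorem hasFDerivAt_rpow_one_add_norm_sub_sq (q : ℝ) (x θ : E) :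
    HasFDerivAt (fun ϑ : E => (1 + ‖ϑ - x‖ ^ 2) ^ q)
      ((2 * q * (1 + ‖θ - x‖ ^ 2) ^ (q - 1)) • innerSL ℝ (θ - x)) θ := by
  have hbase := ((hasFDerivAt_id θ).sub_const x).norm_sq.const_add 1
  have hne : 1 + ‖θ - x‖ ^ 2 ≠ 0 := by positivity
  refine ((hasDerivAt_rpow_const (p := q) (Or.inl hne)).comp_hasFDerivAt θ hbase).congr_fderiv ?_
  ext v
  simp [two_smul]
  ring

theorem fderiv_rpow_one_add_norm_sub_sq (q : ℝ) (x : E) :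
    fderiv ℝ (fun ϑ : E => (1 + ‖ϑ - x‖ ^ 2) ^ q)
      = fun θ => (2 * q * (1 + ‖θ - x‖ ^ 2) ^ (q - 1)) • innerSL ℝ (θ - x) :=
  funext fun θ => (hasFDerivAt_rpow_one_add_norm_sub_sq q x θ).fderiv

theorem hasGradientAt_rpow_one_add_norm_sub_sq [CompleteSpace E] (q : ℝ) (x θ : E) :
    HasGradientAt (fun ϑ : E => (1 + ‖ϑ - x‖ ^ 2) ^ q)
      ((2 * q * (1 + ‖θ - x‖ ^ 2) ^ (q - 1)) • (θ - x)) θ := by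
  rw [hasGradientAt_iff_hasFDerivAt]
  refine (hasFDerivAt_rpow_one_add_norm_sub_sq q x θ).congr_fderiv ?_
  ext v
  simp

theorem iteratedFDeriv_two_rpow_one_add_norm_sub_sq_apply (q : ℝ) (x θ v w : E) :
    iteratedFDeriv ℝ 2 (fun ϑ : E => (1 + ‖ϑ - x‖ ^ 2) ^ q) θ ![v, w]
      = 4 * q * (q - 1) * (1 + ‖θ - x‖ ^ 2) ^ (q - 2) * (inner ℝ (θ - x) v * inner ℝ (θ - x) w)
        + 2 * q * (1 + ‖θ - x‖ ^ 2) ^ (q - 1) * inner ℝ v w := by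
  have hcoeff := (hasFDerivAt_rpow_one_add_norm_sub_sq (q - 1) x θ).const_mul (2 * q)
  have hlin : HasFDerivAt (fun y : E => innerSL ℝ (y - x)) (innerSL ℝ : E →L[ℝ] E →L[ℝ] ℝ) θ := by
    have h := ((innerSL ℝ : E →L[ℝ] E →L[ℝ] ℝ).hasFDerivAt (x := θ - x)).comp θ
      ((hasFDerivAt_id θ).sub_const x)
    rwa [ContinuousLinearMap.comp_id] at h
  have hderiv : HasFDerivAt
      (fun y : E => (2 * q * (1 + ‖y - x‖ ^ 2) ^ (q - 1)) • innerSL ℝ (y - x)) _ θ :=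
    hcoeff.smul hlin
  rw [iteratedFDeriv_two_apply, fderiv_rpow_one_add_norm_sub_sq, hderiv.fderiv]
  simp only [Matrix.cons_val_zero, Matrix.cons_val_one, add_apply, smul_apply,
    ContinuousLinearMap.smulRight_apply, innerSL_apply_apply, smul_eq_mul]
  -- `hlin` uses `innerSL ℝ` at the defeq type `E →L[ℝ] E →L[ℝ] ℝ`, which `simp` does not see through
  erw [innerSL_apply_apply]
  ring_nf

end RpowOneAddNormSq

section Frobenius

attribute [local instance] Matrix.frobeniusNormedAddCommGroup Matrix.frobeniusNormedSpace

variable {m n : Type*} [Fintype m] [Fintype n]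

theorem Matrix.frobenius_norm_eq_sqrt_sum_sq (A : Matrix m n ℝ) :
    ‖A‖ = √(∑ i, ∑ j, A i j ^ 2) := by
  simp [Matrix.frobenius_norm_def, Real.sqrt_eq_rpow]

theorem Matrix.frobenius_norm_vecMulVec_le {α : Type*} [RCLike α] (u : m → α) (v : n → α) :
    ‖Matrix.vecMulVec u v‖ ≤ ‖WithLp.toLp 2 u‖ * ‖WithLp.toLp 2 v‖ := by
  rw [Matrix.vecMulVec_eq Unit]
  simpa using Matrix.frobenius_norm_mul (Matrix.replicateCol Unit u) (Matrix.replicateRow Unit v)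

theorem Matrix.sqrt_sum_sq_smul_vecMulVec_self_add_smul_one_le [DecidableEq n]
    (a c : ℝ) (u : EuclideanSpace ℝ n) :
    √(∑ i, ∑ j, (a • Matrix.vecMulVec u u + c • (1 : Matrix n n ℝ)) i j ^ 2)
      ≤ |a| * ‖u‖ ^ 2 + |c| * √(Fintype.card n) := by
  rw [← Matrix.frobenius_norm_eq_sqrt_sum_sq]
  calc _ ≤ ‖a • Matrix.vecMulVec u u‖ + ‖c • (1 : Matrix n n ℝ)‖ := norm_add_le _ _
    _ ≤ |a| * ‖u‖ ^ 2 + |c| * √(Fintype.card n) := by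
      rw [norm_smul, norm_smul, Real.norm_eq_abs, Real.norm_eq_abs, sq]
      gcongr
      · exact Matrix.frobenius_norm_vecMulVec_le u u
      · simp [← coe_nnnorm, Matrix.frobenius_nnnorm_one]

end Frobenius

theorem rpow_one_add_sq_sub_one_mul_le {q r : ℝ} (hq : q ≤ 1) (hr : 0 ≤ r) :
    (1 + r ^ 2) ^ (q - 1) * r ≤ r ^ (2 * q - 1) := by
  rcases hr.eq_or_lt with rfl | hr
  · simpa using rpow_nonneg le_rfl _
  calc (1 + r ^ 2) ^ (q - 1) * r ≤ (r ^ 2) ^ (q - 1) * r := by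
        gcongr ?_ * r
        exact rpow_le_rpow_of_nonpos (by positivity) (by linarith) (by linarith)
    _ = r ^ (2 * q - 1) := by
        rw [← rpow_natCast, ← rpow_mul hr.le, ← rpow_add_one hr.ne']
        norm_num
        ring_nf

theorem rpow_one_add_sq_hessian_coeff_le {q r D : ℝ} (hq0 : 0 ≤ q) (hq1 : q ≤ 1) (hD : 0 ≤ D) :
    |4 * q * (q - 1) * (1 + r ^ 2) ^ (q - 2)| * r ^ 2 + |2 * q * (1 + r ^ 2) ^ (q - 1)| * D
      ≤ 2 * q * (D + 2) := by
  set s := 1 + r ^ 2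
  have hs1 : 1 ≤ s := by nlinarith [sq_nonneg r]
  have hs0 : 0 < s := by linarith
  have hdecay : s ^ (q - 2) * r ^ 2 ≤ s ^ (q - 1) := by
    calc s ^ (q - 2) * r ^ 2 ≤ s ^ (q - 2) * s := by gcongr; linarith
      _ = s ^ (q - 1) := by rw [← rpow_add_one hs0.ne']; ring_nf
  have hcoeff : 0 ≤ 4 * q * (1 - q) + 2 * q * D := by nlinarith
  have hneg : 4 * q * (q - 1) * s ^ (q - 2) ≤ 0 :=
    mul_nonpos_of_nonpos_of_nonneg (by nlinarith) (rpow_nonneg hs0.le _)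
  rw [abs_of_nonpos hneg, abs_of_nonneg (by positivity)]
  calc -(4 * q * (q - 1) * s ^ (q - 2)) * r ^ 2 + 2 * q * s ^ (q - 1) * D
      = 4 * q * (1 - q) * (s ^ (q - 2) * r ^ 2) + 2 * q * D * s ^ (q - 1) := by ring
    _ ≤ (4 * q * (1 - q) + 2 * q * D) * s ^ (q - 1) := by
      rw [add_mul]
      gcongr
    _ ≤ 4 * q * (1 - q) + 2 * q * D :=
      mul_le_of_le_one_right hcoeff (rpow_le_one_of_one_le_of_nonpos hs1 (by linarith))
    _ ≤ 2 * q * (D + 2) := by nlinarith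

theorem iteratedFDeriv_two_rpow_one_add_norm_sub_sq_single {n : Type*} [Fintype n] [DecidableEq n]
    (q : ℝ) (x θ : EuclideanSpace ℝ n) (i j : n) :
    iteratedFDeriv ℝ 2 (fun ϑ => (1 + ‖ϑ - x‖ ^ 2) ^ q) θ
        ![EuclideanSpace.single i 1, EuclideanSpace.single j 1]
      = ((4 * q * (q - 1) * (1 + ‖θ - x‖ ^ 2) ^ (q - 2)) • Matrix.vecMulVec (θ - x) (θ - x)
          + (2 * q * (1 + ‖θ - x‖ ^ 2) ^ (q - 1)) • (1 : Matrix n n ℝ)) i j := by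
  rw [iteratedFDeriv_two_rpow_one_add_norm_sub_sq_apply]
  simp [Matrix.vecMulVec_apply, Matrix.one_apply, EuclideanSpace.inner_single_right, eq_comm]

theorem lyapunov_gradient_hessian_bounds_general
    {d : ℕ} (α p : ℝ) (hα2 : α < 2)
    (hp1 : 1 ≤ p) (hpα : p < α)
    (x θ : EuclideanSpace ℝ (Fin d)) :
    ‖gradient (fun ϑ => (1 + ‖ϑ - x‖ ^ 2) ^ (p / 2)) θ‖ ≤ p * ‖θ - x‖ ^ (p - 1)
    ∧
    Real.sqrt (∑ i : Fin d, ∑ j : Fin d,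
        (iteratedFDeriv ℝ 2 (fun ϑ => (1 + ‖ϑ - x‖ ^ 2) ^ (p / 2)) θ
          ![EuclideanSpace.single i (1 : ℝ), EuclideanSpace.single j (1 : ℝ)]) ^ 2)
      ≤ p * (Real.sqrt d + 2) := by
  have hq0 : 0 ≤ p / 2 := by linarith
  have hq1 : p / 2 ≤ 1 := by linarith
  have hp : 2 * (p / 2) = p := by ring
  constructor
  · have hdecay := rpow_one_add_sq_sub_one_mul_le hq1 (norm_nonneg (θ - x))
    rw [hp] at hdecay
    rw [(hasGradientAt_rpow_one_add_norm_sub_sq (p / 2) x θ).gradient, norm_smul,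
      Real.norm_eq_abs, abs_of_nonneg (by positivity), mul_assoc, hp]
    exact mul_le_mul_of_nonneg_left hdecay (by linarith)
  · simp_rw [iteratedFDeriv_two_rpow_one_add_norm_sub_sq_single]
    calc _ ≤ _ := Matrix.sqrt_sum_sq_smul_vecMulVec_self_add_smul_one_le _ _ _
      _ ≤ 2 * (p / 2) * (√(Fintype.card (Fin d)) + 2) :=
        rpow_one_add_sq_hessian_coeff_le hq0 hq1 (Real.sqrt_nonneg _)
      _ = p * (√d + 2) := by rw [hp, Fintype.card_fin]

/-- For `α ∈ (1,2)`, `p ∈ [1,α)` and `V_p(θ) = (1 + ‖θ - x‖²)^{p/2}`: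
(i) `‖∇V_p(θ)‖ ≤ p ‖θ - x‖^{p-1}`, and (ii) the Frobenius norm of the Hessian of `V_p`
is at most `p(√d + 2)`. -/
theorem lyapunov_gradient_hessian_bounds
    {d : ℕ} (hd : 1 ≤ d) (α p : ℝ) (hα1 : 1 < α) (hα2 : α < 2)
    (hp1 : 1 ≤ p) (hpα : p < α)
    (x θ : EuclideanSpace ℝ (Fin d)) :
    ‖gradient (fun ϑ => (1 + ‖ϑ - x‖ ^ 2) ^ (p / 2)) θ‖ ≤ p * ‖θ - x‖ ^ (p - 1)
    ∧
    Real.sqrt (∑ i : Fin d, ∑ j : Fin d,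
        (iteratedFDeriv ℝ 2 (fun ϑ => (1 + ‖ϑ - x‖ ^ 2) ^ (p / 2)) θ
          ![EuclideanSpace.single i (1 : ℝ), EuclideanSpace.single j (1 : ℝ)]) ^ 2)
      ≤ p * (Real.sqrt d + 2) :=
  lyapunov_gradient_hessian_bounds_general α p hα2 hp1 hpα x θ
end

section
/- Consider ridge regression with loss f(θ, x) := (1/2)(⟨θ, a⟩ − b)² + (λ/2)‖θ‖², where x = (a, b) with a ∈ ℝ^d, b ∈ ℝ, and λ > 0. Let R > 0 and suppose ‖x‖ ≤ R and ‖x̂‖ ≤ R (norm of the pair (a,b) in ℝ^d × ℝ). Then for all θ, θ̂ ∈ ℝ^d, ‖∇_θ f(θ, x) − ∇_θ f(θ̂, x̂)‖ ≤ (R² + λ)‖θ − θ̂‖ + 2R ‖x − x̂‖ (‖θ‖ + ‖θ̂‖ + 1). -/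
open scoped BigOperators RealInnerProductSpace

/-!
Split the difference of gradients at the intermediate point `(θ', (a, b))`. In `θ` the gradient
is affine with linear part `θ ↦ ⟪a, θ⟫ • a + λ • θ`, of norm at most `‖a‖² + λ ≤ R² + λ`. In the
data, both `⟪a, θ'⟫ • a` and `b • a` are products, and `c • v - c' • v' = (c - c') • v + c' • (v - v')`
bounds their variation by `2R‖θ'‖ Δ` and `2R Δ`, where `Δ` dominates both `‖a - a'‖` and `|b - b'|`.
-/

section NormedSpace

variable {𝕜 E : Type*} [NormedField 𝕜] [SeminormedAddCommGroup E] [NormedSpace 𝕜 E]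

theorem norm_smul_sub_smul_le (c c' : 𝕜) (v v' : E) :
    ‖c • v - c' • v'‖ ≤ ‖c - c'‖ * ‖v‖ + ‖c'‖ * ‖v - v'‖ := by
  have hsplit : c • v - c' • v' = (c - c') • v + c' • (v - v') := by
    rw [sub_smul, smul_sub]; abel
  rw [hsplit, ← norm_smul, ← norm_smul]
  exact norm_add_le _ _

theorem norm_le_sqrt_norm_sq_add_sq (v : E) (t : ℝ) : ‖v‖ ≤ √(‖v‖ ^ 2 + t ^ 2) :=
  Real.le_sqrt_of_sq_le (le_add_of_nonneg_right (sq_nonneg t))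

theorem abs_le_sqrt_norm_sq_add_sq (v : E) (t : ℝ) : |t| ≤ √(‖v‖ ^ 2 + t ^ 2) :=
  Real.abs_le_sqrt (le_add_of_nonneg_left (sq_nonneg ‖v‖))

end NormedSpace

section RidgeRegression

variable {E : Type*} [NormedAddCommGroup E] [InnerProductSpace ℝ E]

/-- The gradient in `θ` of the ridge loss `(1/2)(⟪θ, a⟫ - b)² + (λ/2)‖θ‖²`. -/
def ridgeGradient (lam : ℝ) (a : E) (b : ℝ) (θ : E) : E :=
  ⟪a, θ⟫ • a - b • a + lam • θ

theorem norm_inner_smul_sub_inner_smul_le (a a' θ : E) :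
    ‖⟪a, θ⟫ • a - ⟪a', θ⟫ • a'‖ ≤ (‖a‖ + ‖a'‖) * ‖a - a'‖ * ‖θ‖ := by
  have hdiff : ‖⟪a, θ⟫ - ⟪a', θ⟫‖ ≤ ‖a - a'‖ * ‖θ‖ := by
    rw [← inner_sub_left]; exact norm_inner_le_norm _ _
  calc ‖⟪a, θ⟫ • a - ⟪a', θ⟫ • a'‖
      ≤ ‖⟪a, θ⟫ - ⟪a', θ⟫‖ * ‖a‖ + ‖⟪a', θ⟫‖ * ‖a - a'‖ := norm_smul_sub_smul_le _ _ _ _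
    _ ≤ (‖a - a'‖ * ‖θ‖) * ‖a‖ + (‖a'‖ * ‖θ‖) * ‖a - a'‖ := by
        gcongr
        exact norm_inner_le_norm _ _
    _ = (‖a‖ + ‖a'‖) * ‖a - a'‖ * ‖θ‖ := by ring

theorem norm_ridgeGradient_sub_ridgeGradient_param_le {lam : ℝ} (a : E) (b : ℝ) (θ θ' : E)
    (hlam : 0 ≤ lam) :
    ‖ridgeGradient lam a b θ - ridgeGradient lam a b θ'‖ ≤ (‖a‖ ^ 2 + lam) * ‖θ - θ'‖ := by
  have hlin : ridgeGradient lam a b θ - ridgeGradient lam a b θ'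
      = ⟪a, θ - θ'⟫ • a + lam • (θ - θ') := by
    simp only [ridgeGradient, inner_sub_right, sub_smul, smul_sub]; abel
  have hinner : ‖⟪a, θ - θ'⟫ • a‖ ≤ ‖a‖ ^ 2 * ‖θ - θ'‖ := by
    rw [norm_smul]
    calc ‖⟪a, θ - θ'⟫‖ * ‖a‖ ≤ (‖a‖ * ‖θ - θ'‖) * ‖a‖ := by
          gcongr; exact norm_inner_le_norm _ _
      _ = ‖a‖ ^ 2 * ‖θ - θ'‖ := by ring
  calc ‖ridgeGradient lam a b θ - ridgeGradient lam a b θ'‖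
      ≤ ‖⟪a, θ - θ'⟫ • a‖ + ‖lam • (θ - θ')‖ := hlin ▸ norm_add_le _ _
    _ ≤ ‖a‖ ^ 2 * ‖θ - θ'‖ + lam * ‖θ - θ'‖ := by
        rw [norm_smul lam, Real.norm_of_nonneg hlam]; gcongr
    _ = (‖a‖ ^ 2 + lam) * ‖θ - θ'‖ := by ring

theorem norm_ridgeGradient_sub_ridgeGradient_data_le (lam : ℝ) {a a' : E} {b b' R Δ : ℝ}
    (θ : E) (ha : ‖a‖ ≤ R) (ha' : ‖a'‖ ≤ R) (hb' : |b'| ≤ R)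
    (hda : ‖a - a'‖ ≤ Δ) (hdb : |b - b'| ≤ Δ) :
    ‖ridgeGradient lam a b θ - ridgeGradient lam a' b' θ‖ ≤ 2 * R * Δ * (‖θ‖ + 1) := by
  have hR : 0 ≤ R := (norm_nonneg a).trans ha
  have hΔ : 0 ≤ Δ := (norm_nonneg _).trans hda
  have hsplit : ridgeGradient lam a b θ - ridgeGradient lam a' b' θ
      = (⟪a, θ⟫ • a - ⟪a', θ⟫ • a') - (b • a - b' • a') := by
    simp only [ridgeGradient]; abel
  have hquad : ‖⟪a, θ⟫ • a - ⟪a', θ⟫ • a'‖ ≤ 2 * R * Δ * ‖θ‖ :=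
    calc _ ≤ (‖a‖ + ‖a'‖) * ‖a - a'‖ * ‖θ‖ := norm_inner_smul_sub_inner_smul_le a a' θ
      _ ≤ (R + R) * Δ * ‖θ‖ := by gcongr
      _ = 2 * R * Δ * ‖θ‖ := by ring
  have hlin : ‖b • a - b' • a'‖ ≤ 2 * R * Δ :=
    calc _ ≤ ‖b - b'‖ * ‖a‖ + ‖b'‖ * ‖a - a'‖ := norm_smul_sub_smul_le b b' a a'
      _ ≤ Δ * R + R * Δ := by
          simp only [Real.norm_eq_abs]; gcongr
      _ = 2 * R * Δ := by ring
  calc _ ≤ ‖⟪a, θ⟫ • a - ⟪a', θ⟫ • a'‖ + ‖b • a - b' • a'‖ := hsplit ▸ norm_sub_le _ _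
    _ ≤ 2 * R * Δ * ‖θ‖ + 2 * R * Δ := add_le_add hquad hlin
    _ = 2 * R * Δ * (‖θ‖ + 1) := by ring

end RidgeRegression

theorem ridge_regression_pseudo_lipschitz_general
    {d : ℕ} (lam R : ℝ) (hlam : 0 < lam)
    (a a' : EuclideanSpace ℝ (Fin d)) (b b' : ℝ)
    (hx : Real.sqrt (‖a‖ ^ 2 + b ^ 2) ≤ R)
    (hx' : Real.sqrt (‖a'‖ ^ 2 + b' ^ 2) ≤ R)
    (θ θ' : EuclideanSpace ℝ (Fin d)) :
    ‖(⟪a, θ⟫ • a - b • a + lam • θ) - (⟪a', θ'⟫ • a' - b' • a' + lam • θ')‖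
      ≤ (R ^ 2 + lam) * ‖θ - θ'‖
        + 2 * R * Real.sqrt (‖a - a'‖ ^ 2 + (b - b') ^ 2) * (‖θ‖ + ‖θ'‖ + 1) := by
  set Δ := Real.sqrt (‖a - a'‖ ^ 2 + (b - b') ^ 2)
  have ha : ‖a‖ ≤ R := (norm_le_sqrt_norm_sq_add_sq a b).trans hx
  have hR : 0 ≤ R := (norm_nonneg a).trans ha
  have hΔ : 0 ≤ Δ := Real.sqrt_nonneg _
  have hparam := norm_ridgeGradient_sub_ridgeGradient_param_le a b θ θ' hlam.le
  have hdata := norm_ridgeGradient_sub_ridgeGradient_data_le lam (b := b) θ' ha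
    ((norm_le_sqrt_norm_sq_add_sq a' b').trans hx') ((abs_le_sqrt_norm_sq_add_sq a' b').trans hx')
    (norm_le_sqrt_norm_sq_add_sq _ (b - b')) (abs_le_sqrt_norm_sq_add_sq (a - a') _)
  change ‖ridgeGradient lam a b θ - ridgeGradient lam a' b' θ'‖ ≤ _
  calc _ ≤ ‖ridgeGradient lam a b θ - ridgeGradient lam a b θ'‖
        + ‖ridgeGradient lam a b θ' - ridgeGradient lam a' b' θ'‖ :=
        norm_sub_le_norm_sub_add_norm_sub _ _ _
    _ ≤ (R ^ 2 + lam) * ‖θ - θ'‖ + 2 * R * Δ * (‖θ'‖ + 1) :=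
        add_le_add (hparam.trans (by gcongr)) hdata
    _ ≤ (R ^ 2 + lam) * ‖θ - θ'‖ + 2 * R * Δ * (‖θ‖ + ‖θ'‖ + 1) := by
        gcongr
        linarith [norm_nonneg θ]

/-- Ridge regression `f(θ,(a,b)) = (1/2)(⟨θ,a⟩ - b)² + (λ/2)‖θ‖²`, with
gradient `∇_θ f(θ,(a,b)) = ⟨a,θ⟩ a - b a + λ θ`, satisfies Assumption 1
(pseudo-Lipschitz gradients) with `K₁ = R² + λ` and `K₂ = 2R` whenever the data pairs
have Euclidean norm at most `R`. -/
theorem ridge_regression_pseudo_lipschitz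
    {d : ℕ} (lam R : ℝ) (hlam : 0 < lam) (hR : 0 < R)
    (a a' : EuclideanSpace ℝ (Fin d)) (b b' : ℝ)
    (hx : Real.sqrt (‖a‖ ^ 2 + b ^ 2) ≤ R)
    (hx' : Real.sqrt (‖a'‖ ^ 2 + b' ^ 2) ≤ R)
    (θ θ' : EuclideanSpace ℝ (Fin d)) :
    ‖(⟪a, θ⟫ • a - b • a + lam • θ) - (⟪a', θ'⟫ • a' - b' • a' + lam • θ')‖
      ≤ (R ^ 2 + lam) * ‖θ - θ'‖
        + 2 * R * Real.sqrt (‖a - a'‖ ^ 2 + (b - b') ^ 2) * (‖θ‖ + ‖θ'‖ + 1) :=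
  ridge_regression_pseudo_lipschitz_general lam R hlam a a' b b' hx hx' θ θ'
end

section
/- Consider ℓ₂-regularized logistic regression with loss f(θ, x) := log(1 + exp(−⟨x, θ⟩)) + (λ/2)‖θ‖², where x, θ ∈ ℝ^d and λ > 0. Let R > 0 and suppose ‖x‖ ≤ R and ‖x'‖ ≤ R. Then for all θ, θ' ∈ ℝ^d, ‖∇_θ f(θ', x') − ∇_θ f(θ, x)‖ ≤ (R² + λ)‖θ − θ'‖ + max{1, R} ‖x − x'‖ (‖θ‖ + ‖θ'‖ + 1). -/
/-! The gradient is `s ⟨x, θ⟩ • x + λ θ` with `s t = -σ(-t)`, `σ` the sigmoid. Since `σ` takes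
values in `[0, 1]` and is `1`-Lipschitz (its derivative `σ (1 - σ)` lies in `[0, 1/4]`), writing
`a = ⟨x, θ⟩`, `b = ⟨x', θ'⟩`, splitting `s b • x' - s a • x = s a • (x' - x) + (s b - s a) • x'`
and bounding `|a - b| ≤ ‖x - x'‖ ‖θ‖ + ‖x'‖ ‖θ - θ'‖` gives the estimate. -/
open scoped RealInnerProductSpace
open Real

namespace Real

lemma lipschitzWith_sigmoid : LipschitzWith 1 sigmoid := by
  refine lipschitzWith_of_nnnorm_deriv_le differentiable_sigmoid fun t ↦ ?_
  rw [← NNReal.coe_le_coe, coe_nnnorm, deriv_sigmoid, NNReal.coe_one, norm_mul,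
    Real.norm_of_nonneg (sigmoid_nonneg t), Real.norm_of_nonneg (sub_nonneg.2 (sigmoid_le_one t))]
  exact mul_le_one₀ (sigmoid_le_one t) (sub_nonneg.2 (sigmoid_le_one t))
    (sub_le_self _ (sigmoid_nonneg t))

lemma exp_neg_div_one_add_exp_neg (t : ℝ) : exp (-t) / (1 + exp (-t)) = sigmoid (-t) := by
  rw [← sigmoid_mul_rexp_neg, sigmoid_def, div_eq_inv_mul]

lemma lipschitzWith_neg_sigmoid_neg : LipschitzWith 1 fun t ↦ -sigmoid (-t) := by
  have h := (lipschitzWith_sigmoid.comp LipschitzWith.id.neg).neg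
  rw [mul_one] at h
  exact h

lemma abs_neg_sigmoid_neg_le_one (t : ℝ) : |-sigmoid (-t)| ≤ 1 := by
  rw [abs_neg, abs_of_nonneg (sigmoid_nonneg _)]
  exact sigmoid_le_one _

end Real

section InnerProductSpace

variable {E : Type*} [NormedAddCommGroup E] [InnerProductSpace ℝ E]

lemma abs_inner_sub_inner_le (x x' θ θ' : E) :
    |⟪x, θ⟫ - ⟪x', θ'⟫| ≤ ‖x - x'‖ * ‖θ‖ + ‖x'‖ * ‖θ - θ'‖ := by
  have hsplit : ⟪x, θ⟫ - ⟪x', θ'⟫ = ⟪x - x', θ⟫ + ⟪x', θ - θ'⟫ := by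
    rw [inner_sub_left, inner_sub_right]; ring
  rw [hsplit]
  exact (abs_add_le _ _).trans
    (add_le_add (abs_real_inner_le_norm _ _) (abs_real_inner_le_norm _ _))

lemma norm_glm_gradient_sub_le {s : ℝ → ℝ} (hs : LipschitzWith 1 s) (hs_le : ∀ t, |s t| ≤ 1)
    {lam R : ℝ} (hlam : 0 ≤ lam) {x x' : E} (hx' : ‖x'‖ ≤ R) (θ θ' : E) :
    ‖(s ⟪x', θ'⟫ • x' + lam • θ') - (s ⟪x, θ⟫ • x + lam • θ)‖
      ≤ (R ^ 2 + lam) * ‖θ - θ'‖ + (1 + R * ‖θ‖) * ‖x - x'‖ := by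
  set a := ⟪x, θ⟫
  set b := ⟪x', θ'⟫
  have hR : 0 ≤ R := (norm_nonneg _).trans hx'
  have hsplit : (s b • x' + lam • θ') - (s a • x + lam • θ)
      = s a • (x' - x) + (s b - s a) • x' + lam • (θ' - θ) := by
    module
  have hsab : |s b - s a| ≤ ‖x - x'‖ * ‖θ‖ + R * ‖θ - θ'‖ := by
    calc |s b - s a| = |s a - s b| := abs_sub_comm _ _
      _ ≤ |a - b| := by simpa [Real.dist_eq] using hs.dist_le_mul a b
      _ ≤ ‖x - x'‖ * ‖θ‖ + ‖x'‖ * ‖θ - θ'‖ := abs_inner_sub_inner_le x x' θ θ'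
      _ ≤ ‖x - x'‖ * ‖θ‖ + R * ‖θ - θ'‖ := by gcongr
  rw [hsplit]
  calc ‖s a • (x' - x) + (s b - s a) • x' + lam • (θ' - θ)‖
      ≤ |s a| * ‖x' - x‖ + |s b - s a| * ‖x'‖ + lam * ‖θ' - θ‖ := by
        refine norm_add₃_le.trans_eq ?_
        rw [norm_smul, norm_smul, norm_smul, Real.norm_eq_abs, Real.norm_eq_abs,
          Real.norm_of_nonneg hlam]
    _ ≤ 1 * ‖x - x'‖ + (‖x - x'‖ * ‖θ‖ + R * ‖θ - θ'‖) * R + lam * ‖θ - θ'‖ := by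
        rw [norm_sub_rev x', norm_sub_rev θ']
        gcongr
        exact hs_le _
    _ = (R ^ 2 + lam) * ‖θ - θ'‖ + (1 + R * ‖θ‖) * ‖x - x'‖ := by ring

end InnerProductSpace

theorem logistic_regression_pseudo_lipschitz_general
    {d : ℕ} (lam R : ℝ) (hlam : 0 < lam)
    (x x' : EuclideanSpace ℝ (Fin d)) (hx' : ‖x'‖ ≤ R)
    (θ θ' : EuclideanSpace ℝ (Fin d)) :
    ‖((-(exp (-⟪x', θ'⟫) / (1 + exp (-⟪x', θ'⟫)))) • x' + lam • θ')
        - ((-(exp (-⟪x, θ⟫) / (1 + exp (-⟪x, θ⟫)))) • x + lam • θ)‖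
      ≤ (R ^ 2 + lam) * ‖θ - θ'‖ + max 1 R * ‖x - x'‖ * (‖θ‖ + ‖θ'‖ + 1) := by
  simp only [exp_neg_div_one_add_exp_neg]
  refine (norm_glm_gradient_sub_le lipschitzWith_neg_sigmoid_neg abs_neg_sigmoid_neg_le_one
    hlam.le hx' θ θ').trans ?_
  have hcoeff : 1 + R * ‖θ‖ ≤ max 1 R * (‖θ‖ + ‖θ'‖ + 1) := by
    have := mul_nonneg (zero_le_one.trans (le_max_left 1 R)) (norm_nonneg θ')
    nlinarith [le_max_left 1 R, le_max_right 1 R, norm_nonneg θ]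
  rw [mul_right_comm _ ‖x - x'‖]
  gcongr

/-- ℓ₂-regularized logistic regression
`f(θ,x) = log(1 + exp(-⟨x,θ⟩)) + (λ/2)‖θ‖²`, with gradient
`∇_θ f(θ,x) = -(e^{-⟨x,θ⟩}/(1 + e^{-⟨x,θ⟩})) x + λ θ`, satisfies Assumption 1
(pseudo-Lipschitz gradients) with `K₁ = R² + λ` and `K₂ = max{1, R}` whenever the data
have norm at most `R`. -/
theorem logistic_regression_pseudo_lipschitz
    {d : ℕ} (lam R : ℝ) (hlam : 0 < lam) (hR : 0 < R)
    (x x' : EuclideanSpace ℝ (Fin d)) (hx : ‖x‖ ≤ R) (hx' : ‖x'‖ ≤ R)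
    (θ θ' : EuclideanSpace ℝ (Fin d)) :
    ‖((-(exp (-⟪x', θ'⟫) / (1 + exp (-⟪x', θ'⟫)))) • x' + lam • θ')
        - ((-(exp (-⟪x, θ⟫) / (1 + exp (-⟪x, θ⟫)))) • x + lam • θ)‖
      ≤ (R ^ 2 + lam) * ‖θ - θ'‖ + max 1 R * ‖x - x'‖ * (‖θ‖ + ‖θ'‖ + 1) :=
  logistic_regression_pseudo_lipschitz_general lam R hlam x x' hx' θ θ'
end
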